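/- arXiv:2311.09992 — 6 statements merged into one kernel-verified Lean document; each statement's English description precedes it below -/
import Mathlib

section
/- (q-Hahn presentation, Theorem 2.1) For every real number q with q > 0 and q ≠ 1, every parameter tuple (n,m,k,l) as in the context, and every x ∈ {0,1,…,m}, one has p(x;q) = q^x · (C_q(n,x)/C_q(n,m)) · ([n−2x+1]_q/[n−x+1]_q) · Σ_{i=0}^{min(M,N)} q^{i²} · C_q(M,i) · C_q(N,i) · ω_q(x;i), where ω_q(x;i) := Σ_{r=0}^{min(i,x)} [(q^{−i};q)_r (q^{−x};q)_r (q^{x−n−1};q)_r · q^r] / [(q;q)_r (q^{−m};q)_r (q^{m−n};q)_r] is the terminating basic hypergeometric series ₃φ₂(q^{−i}, q^{−x}, q^{x−n−1}; q^{−m}, q^{m−n}; q, q) (a q-Hahn polynomial value); all denominator factors are nonzero in the indicated range of r. -/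
open Finset

/-- The `q`-integer `[j]_q = 1 + q + ⋯ + q^(j-1)`. -/
noncomputable def qint (q : ℝ) (j : ℕ) : ℝ := ∑ i ∈ Finset.range j, q ^ i

/-- The `q`-factorial `[j]_q! = [1]_q [2]_q ⋯ [j]_q`. -/
noncomputable def qfact (q : ℝ) (j : ℕ) : ℝ := ∏ i ∈ Finset.range j, qint q (i + 1)

/-- The `q`-binomial coefficient `C_q(a,b)`. -/
noncomputable def qbinom (q : ℝ) (a b : ℕ) : ℝ :=
  if b ≤ a then qfact q a / (qfact q b * qfact q (a - b)) else 0

/-- The `q`-Pochhammer symbol `(a;q)_r = (1-a)(1-aq)⋯(1-aq^(r-1))`. -/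
noncomputable def qpoch (a q : ℝ) (r : ℕ) : ℝ := ∏ i ∈ Finset.range r, (1 - a * q ^ i)

/-- The `r`-th term of the terminating balanced `₄φ₃`-series with numerator parameters
`q^a, q^b, q^(-M), q^(-N)`, denominator parameters `q^(-m), q^(m-n), q^(-M-N)`,
base `q` and argument `q`. -/
noncomputable def hypTerm (q : ℝ) (n m M N : ℕ) (a b : ℤ) (r : ℕ) : ℝ :=
  (qpoch (q ^ a) q r * qpoch (q ^ b) q r * qpoch (q ^ (-(M : ℤ))) q r *
      qpoch (q ^ (-(N : ℤ))) q r * q ^ r) /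
    (qpoch q q r * qpoch (q ^ (-(m : ℤ))) q r * qpoch (q ^ ((m : ℤ) - n)) q r *
      qpoch (q ^ (-(M : ℤ) - N)) q r)

/-- The function `p(x;q)` of Definition 1.1 (in its `₄φ₃`-series form), with
`M = m - l` and `N = n - m - k + l`. -/
noncomputable def pq (q : ℝ) (n m k l x : ℕ) : ℝ :=
  qbinom q (n - k) (m - l) * (qbinom q n x / qbinom q n m) * q ^ x *
    (qint q (n - 2 * x + 1) / qint q (n - x + 1)) *
    ∑ r ∈ Finset.range (min x (min (m - l) (n + l - m - k)) + 1),
      hypTerm q n m (m - l) (n + l - m - k) (-(x : ℤ)) ((x : ℤ) - n - 1) r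

namespace QHahn
variable {q : ℝ}

lemma pow_ne_one' (hq : 0 < q) (hq1 : q ≠ 1) {j : ℕ} (hj : j ≠ 0) : q ^ j ≠ 1 := by
  rcases lt_or_gt_of_ne hq1 with h | h
  · exact ne_of_lt (pow_lt_one₀ hq.le h hj)
  · exact ne_of_gt (one_lt_pow₀ h hj)

lemma one_sub_pow_ne (hq : 0 < q) (hq1 : q ≠ 1) {j : ℕ} (hj : j ≠ 0) : 1 - q ^ j ≠ 0 :=
  sub_ne_zero.mpr (Ne.symm (pow_ne_one' hq hq1 hj))

lemma qpoch_qq (r : ℕ) : qpoch q q r = ∏ i ∈ range r, (1 - q ^ (i + 1)) := by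
  unfold qpoch
  refine prod_congr rfl fun i _ => ?_
  rw [pow_succ]; ring

lemma P_ne (hq : 0 < q) (hq1 : q ≠ 1) (r : ℕ) : qpoch q q r ≠ 0 := by
  rw [qpoch_qq]
  exact prod_ne_zero_iff.mpr fun i _ => one_sub_pow_ne hq hq1 (Nat.succ_ne_zero i)

lemma qint_mul (j : ℕ) : qint q j * (q - 1) = q ^ j - 1 := geom_sum_mul q j

lemma qint_pos (hq : 0 < q) {j : ℕ} (hj : j ≠ 0) : 0 < qint q j :=
  Finset.sum_pos (fun i _ => pow_pos hq i) (by simpa using hj)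

lemma qint_ne (hq : 0 < q) {j : ℕ} (hj : j ≠ 0) : qint q j ≠ 0 := (qint_pos hq hj).ne'

lemma qfact_pos (hq : 0 < q) (j : ℕ) : 0 < qfact q j :=
  Finset.prod_pos fun i _ => qint_pos hq (Nat.succ_ne_zero i)

lemma qfact_ne (hq : 0 < q) (j : ℕ) : qfact q j ≠ 0 := (qfact_pos hq j).ne'

lemma qfact_mul_pow (j : ℕ) : qfact q j * (1 - q) ^ j = qpoch q q j := by
  rw [qpoch_qq]
  unfold qfact
  rw [← card_range j, ← prod_const, card_range, ← prod_mul_distrib]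
  refine prod_congr rfl fun i _ => ?_
  have h := qint_mul (q := q) (i + 1)
  nlinarith [h]

lemma qbinom_eq (hq : 0 < q) (hq1 : q ≠ 1) {a b : ℕ} (h : b ≤ a) :
    qbinom q a b = qpoch q q a / (qpoch q q b * qpoch q q (a - b)) := by
  rw [qbinom, if_pos h]
  have h1q : (1 : ℝ) - q ≠ 0 := sub_ne_zero.mpr (Ne.symm hq1)
  rw [div_eq_div_iff (mul_ne_zero (qfact_ne hq b) (qfact_ne hq (a - b)))
    (mul_ne_zero (P_ne hq hq1 b) (P_ne hq hq1 (a - b)))]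
  rw [← qfact_mul_pow, ← qfact_mul_pow, ← qfact_mul_pow]
  have : (1 - q) ^ b * (1 - q) ^ (a - b) = (1 - q) ^ a := by
    rw [← pow_add]; congr 1; omega
  linear_combination qfact q a * qfact q b * qfact q (a-b) * this

lemma qbinom_zero {a b : ℕ} (h : a < b) : qbinom q a b = 0 := if_neg (by omega)

lemma qpoch_neg_zero (hq0 : q ≠ 0) {a r : ℕ} (h : a < r) : qpoch (q ^ (-(a : ℤ))) q r = 0 := by
  refine prod_eq_zero (mem_range.mpr h) ?_
  rw [← zpow_natCast q a, ← zpow_add₀ hq0]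
  simp

lemma Pratio (hq : 0 < q) (hq1 : q ≠ 1) {a r : ℕ} (h : r ≤ a) :
    qpoch q q a = qpoch q q (a - r) * ∏ i ∈ range r, (1 - q ^ (a - i)) := by
  obtain ⟨c, rfl⟩ : ∃ c, a = c + r := ⟨a - r, by omega⟩
  rw [Nat.add_sub_cancel, qpoch_qq, qpoch_qq, prod_range_add]
  congr 1
  rw [← prod_range_reflect (fun i => 1 - q ^ (c + r - i)) r]
  refine prod_congr rfl fun i hi => ?_
  simp only [mem_range] at hi
  congr 2
  omega



lemma qpoch_neg_mul (hq : 0 < q) (hq1 : q ≠ 1) {a r : ℕ} (h : r ≤ a) :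
    qpoch (q ^ (-(a : ℤ))) q r * q ^ (a * r) =
      (-1) ^ r * q ^ (∑ i ∈ range r, i) * (qpoch q q a / qpoch q q (a - r)) := by
  have hq0 : q ≠ 0 := hq.ne'
  have step1 : qpoch (q ^ (-(a : ℤ))) q r * q ^ (a * r) =
      ∏ i ∈ range r, ((-1) * q ^ i * (1 - q ^ (a - i))) := by
    unfold qpoch
    rw [pow_mul, ← card_range r, ← prod_const, card_range, ← prod_mul_distrib]
    refine prod_congr rfl fun i hi => ?_
    simp only [mem_range] at hi
    have h1 : q ^ (-(a : ℤ)) * q ^ i * q ^ a = q ^ i := by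
      rw [← zpow_natCast q i, ← zpow_natCast q a, ← zpow_add₀ hq0, ← zpow_add₀ hq0]
      congr 1; ring
    have h2 : q ^ i * q ^ (a - i) = q ^ a := by
      rw [← pow_add]; congr 1; omega
    nlinarith [h1, h2]
  rw [step1, prod_mul_distrib, prod_mul_distrib, prod_const, card_range,
    prod_pow_eq_pow_sum]
  congr 1
  rw [Pratio hq hq1 h]
  rw [mul_comm (qpoch q q (a-r)), mul_div_assoc, div_self (P_ne hq hq1 (a - r)), mul_one]

lemma qpoch_neg_eq (hq : 0 < q) (hq1 : q ≠ 1) {a r : ℕ} (h : r ≤ a) :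
    qpoch (q ^ (-(a : ℤ))) q r =
      (-1) ^ r * q ^ (∑ i ∈ range r, i) * (qpoch q q a / qpoch q q (a - r)) / q ^ (a * r) := by
  rw [eq_div_iff (pow_ne_zero _ hq.ne')]
  exact qpoch_neg_mul hq hq1 h

lemma qpoch_neg_ne (hq : 0 < q) (hq1 : q ≠ 1) {a r : ℕ} (h : r ≤ a) :
    qpoch (q ^ (-(a : ℤ))) q r ≠ 0 := by
  rw [qpoch_neg_eq hq hq1 h]
  have := P_ne hq hq1 a
  have := P_ne hq hq1 (a - r)
  have h1 : q ^ (∑ i ∈ range r, i) ≠ 0 := pow_ne_zero _ hq.ne'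
  have h2 : (q:ℝ) ^ (a * r) ≠ 0 := pow_ne_zero _ hq.ne'
  have h3 : ((-1:ℝ)) ^ r ≠ 0 := pow_ne_zero _ (by norm_num)
  positivity

lemma qint_add (a b : ℕ) : qint q (a + b) = qint q a + q ^ a * qint q b := by
  unfold qint
  rw [sum_range_add, mul_sum]
  congr 1
  exact sum_congr rfl fun i _ => by rw [pow_add]

lemma qfact_succ (j : ℕ) : qfact q (j + 1) = qfact q j * qint q (j + 1) :=
  prod_range_succ _ j

lemma qpascal (hq : 0 < q) (s j : ℕ) :
    qbinom q (s + 1) (j + 1) = qbinom q s (j + 1) + q ^ ((s : ℤ) - j) * qbinom q s j := by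
  have hq0 : q ≠ 0 := hq.ne'
  rcases lt_trichotomy j s with hj | rfl | hj
  · -- j < s
    rw [qbinom, if_pos (by omega), qbinom, if_pos (by omega), qbinom, if_pos (by omega)]
    have e1 : s + 1 - (j + 1) = s - j := by omega
    have e2 : s - (j + 1) = s - j - 1 := by omega
    rw [e1, e2]
    have hsj : s - j = (s - j - 1) + 1 := by omega
    have hzexp : q ^ ((s : ℤ) - j) = q ^ (s - j) := by
      rw [← zpow_natCast q (s - j)]; congr 1; omega
    have hsplit : qint q (s + 1) = qint q (s - j) + q ^ (s - j) * qint q (j + 1) := by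
      have : s + 1 = (s - j) + (j + 1) := by omega
      rw [this, qint_add]
    rw [hzexp, qfact_succ s, hsplit]
    rw [show qfact q (s - j) = qfact q (s - j - 1) * qint q (s - j) by
      conv_lhs => rw [hsj, qfact_succ, ← hsj]]
    rw [qfact_succ j]
    have n1 : qfact q j ≠ 0 := qfact_ne hq j
    have n2 : qfact q (s - j - 1) ≠ 0 := qfact_ne hq _
    have n3 : qint q (s - j) ≠ 0 := qint_ne hq (by omega)
    have n4 : qint q (j + 1) ≠ 0 := qint_ne hq (by omega)
    field_simp
  · -- j = s
    rw [qbinom, if_pos le_rfl, qbinom, if_neg (by omega), qbinom, if_pos le_rfl]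
    simp only [Nat.sub_self, sub_self, zpow_zero]
    rw [show qfact q 0 = 1 from rfl]
    rw [mul_one, mul_one, div_self (qfact_ne hq (j+1)), div_self (qfact_ne hq j)]
    ring
  · -- s < j
    rw [qbinom, if_neg (by omega), qbinom, if_neg (by omega), qbinom, if_neg (by omega)]
    ring

lemma qbinom_zero_left {b : ℕ} (hb : b ≠ 0) : qbinom q 0 b = 0 := if_neg (by omega)

lemma qbinom_self_zero (hq : 0 < q) (a : ℕ) : qbinom q a 0 = 1 := by
  rw [qbinom, if_pos (Nat.zero_le a)]
  simp only [Nat.sub_zero]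
  rw [show qfact q 0 = 1 from rfl, one_mul, div_self (qfact_ne hq a)]

lemma qvdm (hq : 0 < q) (Y : ℕ) : ∀ (X t : ℕ),
    qbinom q (X + Y) t =
      ∑ j ∈ range (t + 1), qbinom q X j * qbinom q Y (t - j) * q ^ ((j : ℤ) * ((Y : ℤ) - t + j)) := by
  have hq0 : q ≠ 0 := hq.ne'
  intro X
  induction X with
  | zero =>
    intro t
    rw [sum_range_succ']
    have hz : ∀ j ∈ range t, qbinom q 0 (j+1) * qbinom q Y (t - (j+1)) * q ^ (((j:ℕ)+1 : ℤ) * ((Y : ℤ) - t + ((j:ℕ)+1))) = 0 := by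
      intro j _
      rw [qbinom_zero_left (Nat.succ_ne_zero j)]; ring
    rw [sum_congr rfl (fun j hj => by
      push_cast
      exact hz j hj)]
    simp [qbinom_self_zero hq]
  | succ X ih =>
    intro t
    rcases Nat.eq_zero_or_pos t with rfl | ht
    · simp [qbinom_self_zero hq]
    obtain ⟨t', rfl⟩ : ∃ t', t = t' + 1 := ⟨t - 1, by omega⟩
    rw [sum_range_succ']
    have hterm : ∀ j, qbinom q (X + 1) (j + 1) * qbinom q Y (t' - j) *
          q ^ (((j:ℤ) + 1) * ((Y : ℤ) - ((t':ℤ) + 1) + ((j:ℤ) + 1))) =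
        qbinom q X (j + 1) * qbinom q Y (t' - j) *
          q ^ (((j:ℤ) + 1) * ((Y : ℤ) - ((t':ℤ) + 1) + ((j:ℤ) + 1)))
        + q ^ ((X : ℤ) + Y - t') *
          (qbinom q X j * qbinom q Y (t' - j) * q ^ ((j:ℤ) * ((Y : ℤ) - t' + j))) := by
      intro j
      rw [qpascal hq X j]
      have hzp : q ^ ((X : ℤ) - j) * q ^ (((j:ℤ) + 1) * ((Y : ℤ) - ((t':ℤ) + 1) + ((j:ℤ) + 1))) =
          q ^ ((X : ℤ) + Y - t') * q ^ ((j:ℤ) * ((Y : ℤ) - t' + j)) := by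
        rw [← zpow_add₀ hq0, ← zpow_add₀ hq0]
        congr 1; ring
      calc (qbinom q X (j + 1) + q ^ ((X : ℤ) - j) * qbinom q X j) * qbinom q Y (t' - j) *
            q ^ (((j:ℤ) + 1) * ((Y : ℤ) - ((t':ℤ) + 1) + ((j:ℤ) + 1)))
          = qbinom q X (j + 1) * qbinom q Y (t' - j) *
              q ^ (((j:ℤ) + 1) * ((Y : ℤ) - ((t':ℤ) + 1) + ((j:ℤ) + 1)))
            + qbinom q X j * qbinom q Y (t' - j) *
              (q ^ ((X : ℤ) - j) * q ^ (((j:ℤ) + 1) * ((Y : ℤ) - ((t':ℤ) + 1) + ((j:ℤ) + 1)))) := by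
              ring
        _ = _ := by rw [hzp]; ring
    have hfirst : (∑ j ∈ range (t' + 1), (qbinom q X (j + 1) * qbinom q Y (t' - j) *
          q ^ (((j:ℤ) + 1) * ((Y : ℤ) - ((t':ℤ) + 1) + ((j:ℤ) + 1)))))
        + qbinom q (X + 1) 0 * qbinom q Y (t' + 1 - 0) *
            q ^ ((((0:ℕ)):ℤ) * ((Y : ℤ) - (((t'+1:ℕ)):ℤ) + (((0:ℕ)):ℤ))) =
        qbinom q (X + Y) (t' + 1) := by
      rw [ih (t' + 1)]
      rw [sum_range_succ' (fun j => qbinom q X j * qbinom q Y (t' + 1 - j) *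
        q ^ ((j:ℤ) * ((Y : ℤ) - ((t'+1:ℕ):ℤ) + (j:ℤ)))) (t' + 1)]
      congr 1
      · refine sum_congr rfl fun j _ => ?_
        rw [Nat.succ_sub_succ]
        push_cast
        ring_nf
      · rw [qbinom_self_zero hq, qbinom_self_zero hq]
    rw [sum_congr rfl (fun j _ => by push_cast; exact hterm j)]
    rw [sum_add_distrib]
    rw [add_right_comm _ _ (qbinom q (X + 1) 0 * qbinom q Y (t' + 1 - 0) *
        q ^ ((((0:ℕ)):ℤ) * ((Y : ℤ) - (((t'+1:ℕ)):ℤ) + (((0:ℕ)):ℤ))))]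
    rw [hfirst]
    rw [← mul_sum, ← ih t']
    have hp := qpascal hq (X + Y) t'
    rw [show X + 1 + Y = X + Y + 1 by omega, hp]
    congr 2
    all_goals (push_cast; ring)

lemma qbinom_symm {a b : ℕ} (h : b ≤ a) : qbinom q a (a - b) = qbinom q a b := by
  rw [qbinom, qbinom, if_pos (by omega), if_pos h, Nat.sub_sub_self h]
  ring

lemma qvdm' (hq : 0 < q) (A N r : ℕ) (hrN : r ≤ N) :
    ∑ j ∈ range ((N - r) + 1), qbinom q A j * qbinom q N (r + j) * q ^ (j * (r + j)) =
      qbinom q (A + N) (N - r) := by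
  obtain ⟨B, rfl⟩ : ∃ B, N = B + r := ⟨N - r, by omega⟩
  rw [Nat.add_sub_cancel]
  rw [qvdm hq (B + r) A B]
  refine sum_congr rfl fun j hj => ?_
  simp only [mem_range] at hj
  have h1 : B - j = (B + r) - (r + j) := by omega
  rw [h1, qbinom_symm (by omega : r + j ≤ B + r)]
  congr 1
  rw [← zpow_natCast q (j * (r + j))]
  congr 1
  push_cast; ring

lemma key (hq : 0 < q) (hq1 : q ≠ 1) (M N r : ℕ) (hrM : r ≤ M) (hrN : r ≤ N) :
    ∑ i ∈ range (min M N + 1),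
        q ^ (i ^ 2) * qbinom q M i * qbinom q N i * qpoch (q ^ (-(i : ℤ))) q r =
      qbinom q (M + N) M *
        (qpoch (q ^ (-(M : ℤ))) q r * qpoch (q ^ (-(N : ℤ))) q r /
          qpoch (q ^ (-((M + N : ℕ) : ℤ))) q r) := by
  have hq0 : q ≠ 0 := hq.ne'
  have h1 : min M N + 1 = r + ((min M N - r) + 1) := by omega
  rw [h1, sum_range_add]
  have hz : ∀ i ∈ range r, q ^ (i ^ 2) * qbinom q M i * qbinom q N i *
      qpoch (q ^ (-(i : ℤ))) q r = 0 := by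
    intro i hi
    rw [qpoch_neg_zero hq0 (mem_range.mp hi), mul_zero]
  rw [sum_eq_zero hz, zero_add]
  set A := M - r with hA
  set B := N - r with hB
  have hstep : ∀ j ∈ range ((min M N - r) + 1),
      q ^ ((r + j) ^ 2) * qbinom q M (r + j) * qbinom q N (r + j) *
        qpoch (q ^ (-((r + j : ℕ) : ℤ))) q r =
      ((-1) ^ r * q ^ (∑ i ∈ range r, i) * (qpoch q q M / qpoch q q A)) *
        (qbinom q A j * qbinom q N (r + j) * q ^ (j * (r + j))) := by
    intro j hj
    simp only [mem_range] at hj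
    have hjM : r + j ≤ M := by omega
    have hjN : r + j ≤ N := by omega
    have hjA : j ≤ A := by omega
    rw [qpoch_neg_eq hq hq1 (by omega : r ≤ r + j), Nat.add_sub_cancel_left]
    rw [qbinom_eq hq hq1 hjM, qbinom_eq hq hq1 hjN, qbinom_eq hq hq1 hjA]
    have e1 : M - (r + j) = A - j := by omega
    have e2 : A - j = A - j := rfl
    rw [e1]
    have hpow : q ^ ((r + j) ^ 2) = q ^ ((r + j) * r) * q ^ (j * (r + j)) := by
      rw [← pow_add]; congr 1; ring
    rw [hpow]
    have n1 := P_ne hq hq1 M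
    have n2 := P_ne hq hq1 N
    have n3 := P_ne hq hq1 A
    have n4 := P_ne hq hq1 (r + j)
    have n5 := P_ne hq hq1 (A - j)
    have n6 := P_ne hq hq1 (N - (r + j))
    have n7 := P_ne hq hq1 j
    have n8 : q ^ ((r + j) * r) ≠ 0 := pow_ne_zero _ hq0
    field_simp
  rw [sum_congr rfl hstep, ← mul_sum]
  have hext : ∑ j ∈ range ((min M N - r) + 1),
      qbinom q A j * qbinom q N (r + j) * q ^ (j * (r + j)) =
      ∑ j ∈ range (B + 1), qbinom q A j * qbinom q N (r + j) * q ^ (j * (r + j)) := by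
    refine sum_subset (by simp only [range_subset_range]; omega) ?_
    intro j hj hj'
    simp only [mem_range] at hj hj'
    have : A < j := by omega
    rw [qbinom_zero this]
    ring
  rw [hext, hB, qvdm' hq A N r hrN]
  -- now pure algebra
  rw [qbinom_eq hq hq1 (by omega : N - r ≤ A + N), qbinom_eq hq hq1 (by omega : M ≤ M + N)]
  rw [qpoch_neg_eq hq hq1 hrM, qpoch_neg_eq hq hq1 hrN,
    qpoch_neg_eq hq hq1 (by omega : r ≤ M + N)]
  have e3 : A + N - (N - r) = M := by omega
  have e4 : M + N - M = N := by omega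
  rw [e3, e4]
  have hpw : q ^ ((M + N) * r) = q ^ (M * r) * q ^ (N * r) := by
    rw [← pow_add]; congr 1; ring
  rw [hpw]
  have n1 := P_ne hq hq1 M
  have n2 := P_ne hq hq1 N
  have n3 := P_ne hq hq1 A
  have n4 := P_ne hq hq1 (N - r)
  have n5 := P_ne hq hq1 (A + N)
  have n6 := P_ne hq hq1 (M + N)
  have n7 := P_ne hq hq1 (M + N - r)
  have n8 : q ^ (M * r) ≠ 0 := pow_ne_zero _ hq0
  have n9 : q ^ (N * r) ≠ 0 := pow_ne_zero _ hq0
  have n10 : q ^ (∑ i ∈ range r, i) ≠ 0 := pow_ne_zero _ hq0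
  have n11 : ((-1 : ℝ)) ^ r ≠ 0 := pow_ne_zero _ (by norm_num)
  have e5 : A + N = M + N - r := by omega
  rw [e5]
  rw [hA] at n3 ⊢
  field_simp

lemma main_sum (hq : 0 < q) (hq1 : q ≠ 1) (n m x M N : ℕ) :
    (∑ i ∈ range (min M N + 1), q ^ i ^ 2 * qbinom q M i * qbinom q N i *
        ∑ r ∈ range (min i x + 1),
          (qpoch (q ^ (-(i : ℤ))) q r * qpoch (q ^ (-(x : ℤ))) q r *
              qpoch (q ^ ((x : ℤ) - n - 1)) q r * q ^ r) /
            (qpoch q q r * qpoch (q ^ (-(m : ℤ))) q r * qpoch (q ^ ((m : ℤ) - n)) q r)) =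
      qbinom q (M + N) M *
        ∑ r ∈ range (min x (min M N) + 1),
          hypTerm q n m M N (-(x : ℤ)) ((x : ℤ) - n - 1) r := by
  have hq0 : q ≠ 0 := hq.ne'
  have hA : ∀ i ∈ range (min M N + 1),
      (∑ r ∈ range (min i x + 1),
          (qpoch (q ^ (-(i : ℤ))) q r * qpoch (q ^ (-(x : ℤ))) q r *
              qpoch (q ^ ((x : ℤ) - n - 1)) q r * q ^ r) /
            (qpoch q q r * qpoch (q ^ (-(m : ℤ))) q r * qpoch (q ^ ((m : ℤ) - n)) q r)) =
      ∑ r ∈ range (min x (min M N) + 1),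
          (qpoch (q ^ (-(i : ℤ))) q r * qpoch (q ^ (-(x : ℤ))) q r *
              qpoch (q ^ ((x : ℤ) - n - 1)) q r * q ^ r) /
            (qpoch q q r * qpoch (q ^ (-(m : ℤ))) q r * qpoch (q ^ ((m : ℤ) - n)) q r) := by
    intro i hi
    simp only [mem_range] at hi
    refine sum_subset (by simp only [range_subset_range]; omega) ?_
    intro r hr hr'
    simp only [mem_range] at hr hr'
    rcases (by omega : i < r ∨ x < r) with h | h
    · rw [qpoch_neg_zero hq0 h]; simp
    · rw [qpoch_neg_zero hq0 h]; simp
  rw [sum_congr rfl (fun i hi => by rw [hA i hi])]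
  rw [sum_congr rfl (fun i _ => mul_sum (range (min x (min M N) + 1)) _ _)]
  rw [sum_comm, mul_sum]
  refine sum_congr rfl fun r hrr => ?_
  simp only [mem_range] at hrr
  have hw : ∀ i ∈ range (min M N + 1),
      q ^ i ^ 2 * qbinom q M i * qbinom q N i *
        ((qpoch (q ^ (-(i : ℤ))) q r * qpoch (q ^ (-(x : ℤ))) q r *
            qpoch (q ^ ((x : ℤ) - n - 1)) q r * q ^ r) /
          (qpoch q q r * qpoch (q ^ (-(m : ℤ))) q r * qpoch (q ^ ((m : ℤ) - n)) q r)) =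
      (q ^ i ^ 2 * qbinom q M i * qbinom q N i * qpoch (q ^ (-(i : ℤ))) q r) *
        ((qpoch (q ^ (-(x : ℤ))) q r * qpoch (q ^ ((x : ℤ) - n - 1)) q r * q ^ r) /
          (qpoch q q r * qpoch (q ^ (-(m : ℤ))) q r * qpoch (q ^ ((m : ℤ) - n)) q r)) :=
    fun i _ => by ring
  rw [sum_congr rfl hw, ← sum_mul, key hq hq1 M N r (by omega) (by omega)]
  rw [hypTerm]
  have hcast : q ^ (-(M : ℤ) - (N : ℤ)) = q ^ (-(((M + N : ℕ)) : ℤ)) := by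
    congr 1; push_cast; ring
  rw [hcast]
  ring

end QHahn

/-- **Theorem 2.1 (q-Hahn presentation).**
For real `q > 0`, `q ≠ 1`, parameters `(n,m,k,l)` with `0 ≤ m ≤ ⌊n/2⌋`, `0 ≤ k ≤ n`,
`max(0, m+k-n) ≤ l ≤ min(m,k)`, and `x ∈ {0,…,m}`, the function `p(x;q)` equals
`q^x (C_q(n,x)/C_q(n,m)) ([n-2x+1]_q/[n-x+1]_q)
  Σ_{i=0}^{min(M,N)} q^{i²} C_q(M,i) C_q(N,i) ω_q(x;i)`,
where `ω_q(x;i)` is the terminating `₃φ₂(q^{-i},q^{-x},q^{x-n-1};q^{-m},q^{m-n};q,q)`. -/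
theorem qHahn_presentation (q : ℝ) (hq : 0 < q) (hq1 : q ≠ 1)
    (n m k l x : ℕ) (hm : m ≤ n / 2) (hk : k ≤ n)
    (hl : m + k ≤ n + l) (hlm : l ≤ m) (hlk : l ≤ k) (hx : x ≤ m) :
    pq q n m k l x =
      q ^ x * (qbinom q n x / qbinom q n m) *
        (qint q (n - 2 * x + 1) / qint q (n - x + 1)) *
        ∑ i ∈ Finset.range (min (m - l) (n + l - m - k) + 1),
          q ^ (i ^ 2) * qbinom q (m - l) i * qbinom q (n + l - m - k) i *
            ∑ r ∈ Finset.range (min i x + 1),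
              (qpoch (q ^ (-(i : ℤ))) q r * qpoch (q ^ (-(x : ℤ))) q r *
                  qpoch (q ^ ((x : ℤ) - n - 1)) q r * q ^ r) /
                (qpoch q q r * qpoch (q ^ (-(m : ℤ))) q r *
                  qpoch (q ^ ((m : ℤ) - n)) q r) := by
  unfold pq
  rw [QHahn.main_sum hq hq1 n m x (m - l) (n + l - m - k)]
  rw [show n - k = (m - l) + (n + l - m - k) by omega]
  ring
end

section
/- (Cumulative distribution formula, Theorem 2.2, first part) For every real number q with q > 0 and q ≠ 1, every parameter tuple (n,m,k,l) as in the context, and every x ∈ {0,1,…,m}, one has Σ_{u=0}^{x} p(u;q) = C_q(n−k,m−l) · (C_q(n,x)/C_q(n,m)) · Σ_{r=0}^{min(x,M,N)} [(q^{−x};q)_r (q^{x−n};q)_r (q^{−M};q)_r (q^{−N};q)_r · q^r] / [(q;q)_r (q^{−m};q)_r (q^{m−n};q)_r (q^{−M−N};q)_r], the finite sum being the terminating series ₄φ₃(q^{−x}, q^{x−n}, q^{−M}, q^{−N}; q^{−m}, q^{m−n}, q^{−M−N}; q, q); all denominator factors are nonzero in the indicated range of r. -/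
open Finset

section Helpers

variable {q : ℝ}

lemma qint_pos (hq : 0 < q) {j : ℕ} (hj : 0 < j) : 0 < qint q j := by
  unfold qint
  exact Finset.sum_pos (fun i _ => pow_pos hq i) (by simpa using hj.ne')

lemma qfact_pos (hq : 0 < q) (j : ℕ) : 0 < qfact q j := by
  unfold qfact
  exact Finset.prod_pos (fun i _ => qint_pos hq (Nat.succ_pos i))

lemma qbinom_pos (hq : 0 < q) {a b : ℕ} (h : b ≤ a) : 0 < qbinom q a b := by
  unfold qbinom
  rw [if_pos h]
  exact div_pos (qfact_pos hq a) (mul_pos (qfact_pos hq b) (qfact_pos hq _))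

lemma qbinom_zero (hq : 0 < q) (n : ℕ) : qbinom q n 0 = 1 := by
  unfold qbinom
  rw [if_pos (Nat.zero_le n)]
  simp only [Nat.sub_zero, qfact, Finset.range_zero, Finset.prod_empty, one_mul]
  exact div_self (qfact_pos hq n).ne'

lemma qint_eq (hq1 : q ≠ 1) (j : ℕ) : qint q j = (q ^ j - 1) / (q - 1) :=
  geom_sum_eq hq1 j

lemma qpoch_shift (a q : ℝ) (r : ℕ) :
    qpoch a q r * (1 - a * q ^ r) = (1 - a) * qpoch (a * q) q r := by
  unfold qpoch
  rw [← Finset.prod_range_succ, Finset.prod_range_succ']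
  simp only [pow_zero, mul_one, pow_succ]
  rw [mul_comm]
  congr 1
  exact Finset.prod_congr rfl fun i _ => by ring

lemma qpoch_eq_zero {a : ℝ} {i r : ℕ} (hir : i < r) (h : a * q ^ i = 1) :
    qpoch a q r = 0 :=
  Finset.prod_eq_zero (Finset.mem_range.2 hir) (by rw [h]; ring)

lemma qzpow_ne_one (hq : 0 < q) (hq1 : q ≠ 1) {z : ℤ} (hz : z ≠ 0) : q ^ z ≠ 1 := by
  intro h
  exact hz (zpow_right_injective₀ hq hq1 (by simpa using h))

lemma qbinom_rec (hq : 0 < q) {n y : ℕ} (h1 : 1 ≤ y) (h2 : y ≤ n) :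
    qbinom q n y * qint q y = qbinom q n (y - 1) * qint q (n - y + 1) := by
  obtain ⟨z, rfl⟩ : ∃ z, y = z + 1 := ⟨y - 1, by omega⟩
  have e1 : n - (z + 1) + 1 = n - z := by omega
  have e2 : z + 1 - 1 = z := by omega
  unfold qbinom
  rw [e2, e1, if_pos h2, if_pos (by omega : z ≤ n),
    show n - z = (n - (z + 1)) + 1 by omega]
  have f1 : qfact q (z + 1) = qfact q z * qint q (z + 1) := Finset.prod_range_succ _ _
  have f2 : qfact q (n - (z + 1) + 1) = qfact q (n - (z + 1)) * qint q (n - (z + 1) + 1) :=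
    Finset.prod_range_succ _ _
  rw [f1, f2]
  have h3 := (qfact_pos hq z).ne'
  have h4 := (qfact_pos hq (n - (z + 1))).ne'
  have h5 := (qint_pos hq (Nat.succ_pos z)).ne'
  have h6 := (qint_pos hq (Nat.succ_pos (n - (z + 1)))).ne'
  field_simp

lemma step (hq : 0 < q) (hq1 : q ≠ 1) {n x : ℕ} (h2 : 2 * (x + 1) ≤ n) (r : ℕ) :
    qbinom q n (x+1) * (q ^ (x+1) *
      (qint q (n - 2*(x+1) + 1) / qint q (n - (x+1) + 1)) *
      (qpoch (q ^ (-((x+1:ℕ):ℤ))) q r * qpoch (q ^ (((x+1:ℕ):ℤ) - n - 1)) q r))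
    = qbinom q n (x+1) * (qpoch (q ^ (-((x+1:ℕ):ℤ))) q r * qpoch (q ^ (((x+1:ℕ):ℤ) - n)) q r)
      - qbinom q n x * (qpoch (q ^ (-(x:ℤ))) q r * qpoch (q ^ ((x:ℤ) - n)) q r) := by
  have hq0 : q ≠ 0 := hq.ne'
  set a : ℝ := q ^ (-((x+1:ℕ):ℤ)) with ha_def
  set b : ℝ := q ^ (((x+1:ℕ):ℤ) - n - 1) with hb_def
  have ha : a ≠ 0 := zpow_ne_zero _ hq0
  have hb : b ≠ 0 := zpow_ne_zero _ hq0
  have ha1 : (1:ℝ) - a ≠ 0 :=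
    sub_ne_zero.2 (Ne.symm (qzpow_ne_one hq hq1 (by push_cast; omega)))
  have hb1 : (1:ℝ) - b ≠ 0 :=
    sub_ne_zero.2 (Ne.symm (qzpow_ne_one hq hq1 (by push_cast; omega)))
  have hbinv : b⁻¹ - 1 ≠ 0 := by
    rw [hb_def, ← zpow_neg]
    exact sub_ne_zero.2 (qzpow_ne_one hq hq1 (by push_cast; omega))
  have hainv : a⁻¹ - 1 ≠ 0 := by
    rw [ha_def, ← zpow_neg]
    exact sub_ne_zero.2 (qzpow_ne_one hq hq1 (by push_cast; omega))
  have hq1' : q - 1 ≠ 0 := sub_ne_zero.2 hq1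
  -- rewrite the x-indexed zpow's in terms of a, b
  have e1 : q ^ (-(x:ℤ)) = a * q := by
    rw [ha_def, ← zpow_add_one₀ hq0]; congr 1; push_cast; ring
  have e2 : q ^ ((x:ℤ) - n) = b := by
    rw [hb_def]; congr 1; push_cast; ring
  have e3 : q ^ (((x+1:ℕ):ℤ) - n) = b * q := by
    rw [hb_def, ← zpow_add_one₀ hq0]
    congr 1; ring
  -- nat powers in terms of a, b
  have pw1 : (q:ℝ) ^ (n - 2*(x+1) + 1) = a * b⁻¹ := by
    rw [ha_def, hb_def, ← zpow_natCast q (n - 2*(x+1) + 1),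
      show ((n - 2*(x+1) + 1 : ℕ) : ℤ) = -((x+1:ℕ):ℤ) - (((x+1:ℕ):ℤ) - n - 1) from by
        push_cast [Nat.cast_sub (by omega : 2*(x+1) ≤ n)]; ring,
      zpow_sub₀ hq0, div_eq_mul_inv]
  have pw2 : (q:ℝ) ^ (n - (x+1) + 1) = b⁻¹ := by
    rw [hb_def, ← zpow_natCast q (n - (x+1) + 1), ← zpow_neg]
    congr 1
    push_cast [Nat.cast_sub (by omega : x+1 ≤ n)]; ring
  have pw3 : (q:ℝ) ^ (x+1) = a⁻¹ := by
    rw [ha_def, ← zpow_natCast q (x+1), ← zpow_neg, neg_neg]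
  -- pochhammer shifts
  have sA : qpoch (a * q) q r = qpoch a q r * (1 - a * q ^ r) / (1 - a) := by
    rw [eq_div_iff ha1]
    linear_combination -qpoch_shift a q r
  have sB : qpoch (b * q) q r = qpoch b q r * (1 - b * q ^ r) / (1 - b) := by
    rw [eq_div_iff hb1]
    linear_combination -qpoch_shift b q r
  -- binomial recurrence
  have hI2 : qint q (n - (x+1) + 1) ≠ 0 := (qint_pos hq (Nat.succ_pos _)).ne'
  have hcx : qbinom q n x =
      qbinom q n (x+1) * qint q (x+1) / qint q (n - (x+1) + 1) := by
    rw [qbinom_rec hq (by omega) (by omega)]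
    field_simp
    simp
  rw [e1, e2, e3, sA, sB, hcx, qint_eq hq1 (n - 2*(x+1) + 1), qint_eq hq1 (n - (x+1) + 1),
    qint_eq hq1 (x+1), pw1, pw2, pw3]
  field_simp
  ring

lemma cum (hq : 0 < q) (hq1 : q ≠ 1) {n : ℕ} (x : ℕ) (h : 2 * x ≤ n) (r : ℕ) :
    ∑ u ∈ Finset.range (x+1), qbinom q n u * (q ^ u *
        (qint q (n - 2*u + 1) / qint q (n - u + 1)) *
        (qpoch (q ^ (-(u:ℤ))) q r * qpoch (q ^ ((u:ℤ) - n - 1)) q r))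
    = qbinom q n x * (qpoch (q ^ (-(x:ℤ))) q r * qpoch (q ^ ((x:ℤ) - n)) q r) := by
  induction x with
  | zero =>
    rw [Finset.sum_range_one]
    have h1 : qint q (n - 0 + 1) ≠ 0 := (qint_pos hq (Nat.succ_pos _)).ne'
    rcases Nat.eq_zero_or_pos r with hr | hr
    · subst hr
      have h1' : qint q (n + 1) ≠ 0 := (qint_pos hq (Nat.succ_pos _)).ne'
      simp [qpoch, div_self h1']
    · have h0 : qpoch (q ^ (-((0:ℕ):ℤ))) q r = 0 :=
        qpoch_eq_zero hr (by simp)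
      rw [h0]
      simp
  | succ x ih =>
    rw [Finset.sum_range_succ, ih (by omega), step hq hq1 (by omega) r]
    ring

end Helpers

noncomputable def Wfac (q : ℝ) (n m M N : ℕ) (r : ℕ) : ℝ :=
  (qpoch (q ^ (-(M:ℤ))) q r * qpoch (q ^ (-(N:ℤ))) q r * q ^ r) /
    (qpoch q q r * qpoch (q ^ (-(m:ℤ))) q r * qpoch (q ^ ((m:ℤ) - n)) q r *
      qpoch (q ^ (-(M:ℤ) - N)) q r)

lemma hypTerm_factor (q : ℝ) (n m M N : ℕ) (a b : ℤ) (r : ℕ) :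
    hypTerm q n m M N a b r =
      qpoch (q ^ a) q r * qpoch (q ^ b) q r * Wfac q n m M N r := by
  unfold hypTerm Wfac
  ring

lemma hypTerm_vanish {q : ℝ} (hq : 0 < q) (n m M N : ℕ) (u : ℕ) (b : ℤ) {r : ℕ}
    (hr : u < r) : hypTerm q n m M N (-(u:ℤ)) b r = 0 := by
  unfold hypTerm
  rw [qpoch_eq_zero hr (by rw [← zpow_natCast q u, ← zpow_add₀ hq.ne']; simp)]
  simp


/-- **Theorem 2.2, first part (cumulative distribution formula).**
`Σ_{u=0}^{x} p(u;q) = C_q(n-k,m-l) (C_q(n,x)/C_q(n,m))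
  ₄φ₃(q^{-x},q^{x-n},q^{-M},q^{-N};q^{-m},q^{m-n},q^{-M-N};q,q)`. -/
theorem cdf_formula (q : ℝ) (hq : 0 < q) (hq1 : q ≠ 1)
    (n m k l x : ℕ) (hm : m ≤ n / 2) (hk : k ≤ n)
    (hl : m + k ≤ n + l) (hlm : l ≤ m) (hlk : l ≤ k) (hx : x ≤ m) :
    ∑ u ∈ Finset.range (x + 1), pq q n m k l u =
      qbinom q (n - k) (m - l) * (qbinom q n x / qbinom q n m) *
        ∑ r ∈ Finset.range (min x (min (m - l) (n + l - m - k)) + 1),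
          hypTerm q n m (m - l) (n + l - m - k) (-(x : ℤ)) ((x : ℤ) - n) r := by
  set M := m - l with hM
  set N := n + l - m - k with hN
  set R := min x (min M N) + 1 with hR
  set K := qbinom q (n - k) M with hK
  have key : ∀ u ∈ Finset.range (x+1), pq q n m k l u =
      ∑ r ∈ Finset.range R, (K / qbinom q n m) *
        ((qbinom q n u * (q ^ u * (qint q (n - 2*u + 1) / qint q (n - u + 1)) *
          (qpoch (q ^ (-(u:ℤ))) q r * qpoch (q ^ ((u:ℤ) - n - 1)) q r))) *
          Wfac q n m M N r) := by
    intro u hu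
    simp only [Finset.mem_range] at hu
    have hsub : Finset.range (min u (min M N) + 1) ⊆ Finset.range R := by
      apply Finset.range_subset_range.2
      omega
    calc pq q n m k l u
        = ∑ r ∈ Finset.range (min u (min M N) + 1),
            (K * (qbinom q n u / qbinom q n m) * q ^ u *
              (qint q (n - 2*u + 1) / qint q (n - u + 1))) *
              hypTerm q n m M N (-(u:ℤ)) ((u:ℤ) - n - 1) r := by
          rw [pq, Finset.mul_sum]
      _ = ∑ r ∈ Finset.range R,
            (K * (qbinom q n u / qbinom q n m) * q ^ u *
              (qint q (n - 2*u + 1) / qint q (n - u + 1))) *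
              hypTerm q n m M N (-(u:ℤ)) ((u:ℤ) - n - 1) r := by
          apply Finset.sum_subset hsub
          intro r hr hnr
          simp only [Finset.mem_range] at hr hnr
          rw [hypTerm_vanish hq n m M N u _ (by omega), mul_zero]
      _ = _ := by
          apply Finset.sum_congr rfl
          intro r _
          rw [hypTerm_factor]
          ring
  rw [Finset.sum_congr rfl key, Finset.sum_comm]
  have inner : ∀ r ∈ Finset.range R,
      (∑ u ∈ Finset.range (x+1), (K / qbinom q n m) *
        ((qbinom q n u * (q ^ u * (qint q (n - 2*u + 1) / qint q (n - u + 1)) *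
          (qpoch (q ^ (-(u:ℤ))) q r * qpoch (q ^ ((u:ℤ) - n - 1)) q r))) *
          Wfac q n m M N r))
      = K * (qbinom q n x / qbinom q n m) * hypTerm q n m M N (-(x:ℤ)) ((x:ℤ) - n) r := by
    intro r _
    have : ∑ u ∈ Finset.range (x+1), (K / qbinom q n m) *
        ((qbinom q n u * (q ^ u * (qint q (n - 2*u + 1) / qint q (n - u + 1)) *
          (qpoch (q ^ (-(u:ℤ))) q r * qpoch (q ^ ((u:ℤ) - n - 1)) q r))) *
          Wfac q n m M N r)
        = (K / qbinom q n m) * ((∑ u ∈ Finset.range (x+1),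
            qbinom q n u * (q ^ u * (qint q (n - 2*u + 1) / qint q (n - u + 1)) *
            (qpoch (q ^ (-(u:ℤ))) q r * qpoch (q ^ ((u:ℤ) - n - 1)) q r))) *
            Wfac q n m M N r) := by
      rw [Finset.sum_mul, Finset.mul_sum]
    rw [this, cum hq hq1 x (by omega) r, hypTerm_factor]
    ring
  rw [Finset.sum_congr rfl inner, ← Finset.mul_sum]
end

section
/- (Cumulative distribution formula for q = 1; Theorem 4.2, first part) For every parameter tuple (n,m,k,l) as in the context and every x ∈ {0,1,…,m}, one has Σ_{u=0}^{x} p(u) = C(n−k,m−l) · (C(n,x)/C(n,m)) · Σ_{r=0}^{min(x,M,N)} [(−x)_r (x−n)_r (−M)_r (−N)_r] / [r!·(−m)_r·(m−n)_r·(−M−N)_r], the finite sum being the terminating hypergeometric series ₄F₃(−x, x−n, −M, −N; −m, m−n, −M−N; 1). -/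
/-!
For fixed `r`, the `u`-dependence of the `r`-th term of `p(u)` and of the right-hand side sits in
`(-u)_r (u-n-1)_r` and `(-u)_r (u-n)_r`. The contiguous relation
`b (a)_r (b+1)_r = a (a+1)_r (b)_r + (b-a) (a)_r (b)_r` at `a = -(u+1)`, `b = u-n`, together with
`C(n,u+1) (u+1) = C(n,u) (n-u)`, gives
`C(n,u+1) (-u-1)_r (u+1-n)_r = C(n,u) (-u)_r (u-n)_r + C(n,u+1) (n-2u-1)/(n-u) (-u-1)_r (u-n)_r`,
so the sum over `u` telescopes separately for every `r`. Cutting the series off at `min(x, M, N)`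
instead of a common bound changes nothing, because `(-j)_r = 0` for `r > j`.
-/

open Finset

/-- The raising factorial `(a)_r = a(a+1)⋯(a+r-1)`, as a rational number. -/
def raise (a : ℤ) (r : ℕ) : ℚ := ∏ i ∈ Finset.range r, ((a : ℚ) + i)

/-- The `r`-th term of the terminating balanced `₄F₃`-series with numerator parameters
`a, b, -M, -N` and denominator parameters `-m, m-n, -M-N`, evaluated at `1`. -/
def hgTerm (n m M N : ℕ) (a b : ℤ) (r : ℕ) : ℚ :=
  (raise a r * raise b r * raise (-(M : ℤ)) r * raise (-(N : ℤ)) r) /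
    ((Nat.factorial r : ℚ) * raise (-(m : ℤ)) r * raise ((m : ℤ) - n) r *
      raise (-(M : ℤ) - N) r)

/-- The `q → 1` limit function `p(x) = p(x | n,m,k,l)` of (4.1), with `M = m - l` and
`N = n - m - k + l`: a Racah polynomial value times a positive factor. -/
def pone (n m k l x : ℕ) : ℚ :=
  (Nat.choose (n - k) (m - l) : ℚ) * ((Nat.choose n x : ℚ) / (Nat.choose n m : ℚ)) *
    (((n : ℚ) - 2 * x + 1) / ((n : ℚ) - x + 1)) *
    ∑ r ∈ Finset.range (min x (min (m - l) (n + l - m - k)) + 1),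
      hgTerm n m (m - l) (n + l - m - k) (-(x : ℤ)) ((x : ℤ) - n - 1) r

lemma raise_zero_right (a : ℤ) : raise a 0 = 1 := by
  simp [raise]

lemma raise_succ (a : ℤ) (r : ℕ) : raise a (r + 1) = raise a r * ((a : ℚ) + r) :=
  prod_range_succ _ r

lemma raise_succ' (a : ℤ) (r : ℕ) : raise a (r + 1) = (a : ℚ) * raise (a + 1) r := by
  simp only [raise, prod_range_succ', mul_comm (a : ℚ)]
  push_cast
  simp only [add_zero, add_assoc, add_comm (1 : ℚ)]

lemma raise_add_one_mul (a : ℤ) (r : ℕ) :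
    raise (a + 1) r * a = raise a r * ((a : ℚ) + r) := by
  rw [← raise_succ, raise_succ', mul_comm]

lemma raise_zero_left_succ (r : ℕ) : raise 0 (r + 1) = 0 := by
  simp [raise_succ']

lemma raise_neg_natCast_eq_zero {j r : ℕ} (h : j < r) : raise (-(j : ℤ)) r = 0 :=
  prod_eq_zero (mem_range.mpr h) (by push_cast; ring)

lemma mul_raise_raise_add_one (a b : ℤ) (r : ℕ) :
    (b : ℚ) * (raise a r * raise (b + 1) r) =
      a * (raise (a + 1) r * raise b r) + ((b : ℚ) - a) * (raise a r * raise b r) := by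
  linear_combination raise a r * raise_add_one_mul b r - raise b r * raise_add_one_mul a r

lemma choose_succ_mul_raise (n u r : ℕ) (hu : u < n) :
    (n.choose (u + 1) : ℚ) * (raise (-((u + 1 : ℕ) : ℤ)) r * raise ((u + 1 : ℕ) - (n : ℤ)) r) =
      n.choose u * (raise (-(u : ℤ)) r * raise ((u : ℤ) - n) r) +
        n.choose (u + 1) * (((n : ℚ) - 2 * (u + 1 : ℕ) + 1) / ((n : ℚ) - (u + 1 : ℕ) + 1)) *
          (raise (-((u + 1 : ℕ) : ℤ)) r * raise ((u + 1 : ℕ) - (n : ℤ) - 1) r) := by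
  have hnu : (n : ℚ) - (u + 1) + 1 ≠ 0 := by
    rw [sub_add_eq_sub_sub, sub_add_cancel]; exact sub_ne_zero.mpr (by exact_mod_cast hu.ne')
  have hchoose : (n.choose (u + 1) : ℚ) * (u + 1) = n.choose u * (n - u) := by
    rw [← Nat.cast_sub hu.le]
    exact_mod_cast Nat.choose_succ_right_eq n u
  have hcontig := mul_raise_raise_add_one (-((u : ℤ) + 1)) ((u : ℤ) - n) r
  rw [show -((u : ℤ) + 1) + 1 = -(u : ℤ) by ring] at hcontig
  rw [show ((u + 1 : ℕ) : ℤ) - n - 1 = (u : ℤ) - n by push_cast; ring,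
    show ((u + 1 : ℕ) : ℤ) - n = (u : ℤ) - n + 1 by push_cast; ring]
  push_cast at hcontig ⊢
  field_simp
  linear_combination (-(n.choose (u + 1) : ℚ)) * hcontig +
    raise (-(u : ℤ)) r * raise ((u : ℤ) - n) r * hchoose

lemma sum_range_choose_mul_raise (n r x : ℕ) (hx : x ≤ n) :
    ∑ u ∈ range (x + 1), (n.choose u : ℚ) * (((n : ℚ) - 2 * u + 1) / ((n : ℚ) - u + 1)) *
        (raise (-(u : ℤ)) r * raise ((u : ℤ) - n - 1) r) =
      n.choose x * (raise (-(x : ℤ)) r * raise ((x : ℤ) - n) r) := by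
  induction x with
  | zero =>
    have hn : (n : ℚ) + 1 ≠ 0 := by positivity
    cases r <;> simp [raise_zero_right, raise_zero_left_succ, hn]
  | succ x ih =>
    rw [sum_range_succ, ih (by omega), choose_succ_mul_raise n x r (by omega)]

def hgWeight (n m M N r : ℕ) : ℚ :=
  raise (-(M : ℤ)) r * raise (-(N : ℤ)) r /
    ((Nat.factorial r : ℚ) * raise (-(m : ℤ)) r * raise ((m : ℤ) - n) r * raise (-(M : ℤ) - N) r)

lemma hgTerm_eq_raise_mul_hgWeight (n m M N : ℕ) (a b : ℤ) (r : ℕ) :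
    hgTerm n m M N a b r = raise a r * raise b r * hgWeight n m M N r := by
  rw [hgTerm, hgWeight]
  ring

lemma sum_range_choose_mul_hgTerm (n m M N r x : ℕ) (hx : x ≤ n) :
    ∑ u ∈ range (x + 1), (n.choose u : ℚ) * (((n : ℚ) - 2 * u + 1) / ((n : ℚ) - u + 1)) *
        hgTerm n m M N (-(u : ℤ)) ((u : ℤ) - n - 1) r =
      n.choose x * hgTerm n m M N (-(x : ℤ)) ((x : ℤ) - n) r := by
  simp only [hgTerm_eq_raise_mul_hgWeight]
  rw [← mul_assoc, ← mul_assoc, mul_assoc (n.choose x : ℚ), ← sum_range_choose_mul_raise n r x hx,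
    sum_mul]
  exact sum_congr rfl fun _ _ => by ring

lemma sum_range_hgTerm_eq_of_le (n m M N : ℕ) (b : ℤ) {x L : ℕ} (hxL : x ≤ L) :
    ∑ r ∈ range (min x (min M N) + 1), hgTerm n m M N (-(x : ℤ)) b r =
      ∑ r ∈ range (L + 1), hgTerm n m M N (-(x : ℤ)) b r := by
  refine sum_subset (range_subset_range.mpr (by omega)) fun r _ hr => ?_
  have hr' : x < r ∨ M < r ∨ N < r := by
    simp only [mem_range, not_lt] at hr
    omega
  rcases hr' with h | h | h <;> simp [hgTerm, raise_neg_natCast_eq_zero h]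

theorem cdf_formula_q_one_general
    (n m k l x : ℕ) (hm : m ≤ n / 2) (hx : x ≤ m) :
    ∑ u ∈ Finset.range (x + 1), pone n m k l u =
      (Nat.choose (n - k) (m - l) : ℚ) * ((Nat.choose n x : ℚ) / (Nat.choose n m : ℚ)) *
        ∑ r ∈ Finset.range (min x (min (m - l) (n + l - m - k)) + 1),
          hgTerm n m (m - l) (n + l - m - k) (-(x : ℤ)) ((x : ℤ) - n) r := by
  have hxn : x ≤ n := by omega
  calc ∑ u ∈ range (x + 1), pone n m k l u
      = (n - k).choose (m - l) / n.choose m * ∑ r ∈ range (x + 1), ∑ u ∈ range (x + 1),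
          (n.choose u : ℚ) * (((n : ℚ) - 2 * u + 1) / ((n : ℚ) - u + 1)) *
            hgTerm n m (m - l) (n + l - m - k) (-(u : ℤ)) ((u : ℤ) - n - 1) r := by
        rw [sum_comm, mul_sum]
        refine sum_congr rfl fun u hu => ?_
        rw [pone, sum_range_hgTerm_eq_of_le _ _ _ _ _ (mem_range_succ_iff.mp hu), mul_sum, mul_sum]
        exact sum_congr rfl fun _ _ => by ring
    _ = _ := by
        simp only [sum_range_choose_mul_hgTerm _ _ _ _ _ _ hxn]
        rw [sum_range_hgTerm_eq_of_le _ _ _ _ _ le_rfl, ← mul_sum]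
        ring

/-- **Theorem 4.2, first part (cumulative distribution formula for `q = 1`).**
`Σ_{u=0}^{x} p(u) = C(n-k,m-l) (C(n,x)/C(n,m)) ₄F₃(-x,x-n,-M,-N;-m,m-n,-M-N;1)`. -/
theorem cdf_formula_q_one
    (n m k l x : ℕ) (hm : m ≤ n / 2) (hk : k ≤ n)
    (hl : m + k ≤ n + l) (hlm : l ≤ m) (hlk : l ≤ k) (hx : x ≤ m) :
    ∑ u ∈ Finset.range (x + 1), pone n m k l u =
      (Nat.choose (n - k) (m - l) : ℚ) * ((Nat.choose n x : ℚ) / (Nat.choose n m : ℚ)) *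
        ∑ r ∈ Finset.range (min x (min (m - l) (n + l - m - k)) + 1),
          hgTerm n m (m - l) (n + l - m - k) (-(x : ℤ)) ((x : ℤ) - n) r :=
  cdf_formula_q_one_general n m k l x hm hx
end

section
/- (Hahn presentation; Theorem 4.1) For every parameter tuple (n,m,k,l) as in the context and every x ∈ {0,1,…,m}, one has p(x) = (C(n,x)/C(n,m)) · ((n−2x+1)/(n−x+1)) · Σ_{i=0}^{min(M,N)} C(M,i) · C(N,i) · ω(x;i), where ω(x;i) := Σ_{r=0}^{min(i,x)} [(−i)_r (−x)_r (x−n−1)_r] / [r!·(−m)_r·(m−n)_r] is the terminating hypergeometric series ₃F₂(−i, −x, x−n−1; −m, m−n; 1) (a Hahn polynomial value); all denominator factors are nonzero in the indicated range of r. -/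
open Finset

lemma raise_neg_nat (a r : ℕ) : raise (-(a:ℤ)) r = (-1:ℚ)^r * (a.descFactorial r : ℚ) := by
  induction r with
  | zero => simp [raise]
  | succ r ih =>
    rw [raise, Finset.prod_range_succ, ← raise, ih, Nat.descFactorial_succ]
    rcases lt_or_ge r a with h | h
    · rw [Nat.cast_mul, Nat.cast_sub h.le]
      push_cast
      ring
    · rcases eq_or_lt_of_le h with heq | hlt
      · subst heq
        simp only [Nat.sub_self, Nat.zero_mul, Nat.cast_zero, mul_zero]
        push_cast
        ring
      · rw [Nat.descFactorial_eq_zero_iff_lt.2 hlt]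
        simp

lemma raise_neg_choose (a r : ℕ) :
    raise (-(a:ℤ)) r = (-1:ℚ)^r * (r.factorial : ℚ) * (a.choose r : ℚ) := by
  rw [raise_neg_nat, Nat.descFactorial_eq_factorial_mul_choose]
  push_cast; ring

lemma raise_neg_ne_zero {a r : ℕ} (h : r ≤ a) : raise (-(a:ℤ)) r ≠ 0 := by
  rw [raise_neg_nat]
  simp [Nat.descFactorial_eq_zero_iff_lt]
  omega

lemma raise_neg_eq_zero {a r : ℕ} (h : a < r) : raise (-(a:ℤ)) r = 0 := by
  rw [raise_neg_nat, Nat.descFactorial_eq_zero_iff_lt.2 h]; simp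

lemma star (M N r : ℕ) (hrM : r ≤ M) (hrN : r ≤ N) :
    ∑ i ∈ Finset.range (min M N + 1), M.choose i * (N.choose i * i.choose r)
      = N.choose r * (M + N - r).choose (M - r) := by
  have hvdm : ∑ j ∈ Finset.range (M - r + 1), M.choose (r + j) * (N - r).choose j
      = (M + N - r).choose (M - r) := by
    have h1 : M + N - r = M + (N - r) := by omega
    rw [h1, Nat.add_choose_eq]
    rw [Finset.Nat.sum_antidiagonal_eq_sum_range_succ (fun a b => M.choose a * (N - r).choose b)]
    rw [← Finset.sum_range_reflect]
    apply Finset.sum_congr rfl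
    intro j hj
    simp only [Finset.mem_range] at hj
    have e1 : r + (M - r + 1 - 1 - j) = M - j := by omega
    have e2 : M - r + 1 - 1 - j = M - r - j := by omega
    rw [e1, e2, Nat.choose_symm (by omega)]
  have h0 : ∑ i ∈ Finset.Ico 0 r, M.choose i * (N.choose i * i.choose r) = 0 := by
    apply Finset.sum_eq_zero
    intro i hi
    simp only [Finset.mem_Ico] at hi
    rw [Nat.choose_eq_zero_of_lt hi.2]
    ring
  have hdrop : ∑ i ∈ Finset.range (min M N + 1), M.choose i * (N.choose i * i.choose r)
      = ∑ i ∈ Finset.Ico r (min M N + 1), M.choose i * (N.choose i * i.choose r) := by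
    rw [Finset.range_eq_Ico,
      ← Finset.sum_Ico_consecutive _ (Nat.zero_le r) (by omega : r ≤ min M N + 1), h0, zero_add]
  rw [hdrop, Finset.sum_Ico_eq_sum_range]
  have hterm : ∀ j, M.choose (r + j) * (N.choose (r + j) * (r + j).choose r)
      = N.choose r * (M.choose (r + j) * (N - r).choose j) := by
    intro j
    by_cases hc : r + j ≤ N
    · have h3 := Nat.choose_mul (n := N) (Nat.le_add_right r j)
      have e : r + j - r = j := by omega
      rw [e] at h3
      rw [h3]; ring
    · rw [Nat.choose_eq_zero_of_lt (show N < r + j by omega),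
        Nat.choose_eq_zero_of_lt (show N - r < j by omega)]
      ring
  simp only [hterm]
  rw [← Finset.mul_sum]
  congr 1
  rw [← hvdm]
  apply Finset.sum_subset
  · exact Finset.range_subset_range.2 (by omega)
  · intro j hj hnj
    simp only [Finset.mem_range] at hj hnj
    rw [Nat.choose_eq_zero_of_lt (show N - r < j by omega)]
    ring

lemma perR (n m M N x r : ℕ) (hmn : 2 * m ≤ n) (hxm : x ≤ m) (hrx : r ≤ x)
    (hrM : r ≤ M) (hrN : r ≤ N) :
    (((M + N).choose M : ℕ) : ℚ) * hgTerm n m M N (-(x:ℤ)) ((x:ℤ) - n - 1) r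
      = ∑ i ∈ Finset.range (min M N + 1),
          (M.choose i : ℚ) * (N.choose i : ℚ) *
            ((raise (-(i:ℤ)) r * raise (-(x:ℤ)) r * raise ((x:ℤ) - n - 1) r) /
              ((r.factorial : ℚ) * raise (-(m:ℤ)) r * raise ((m:ℤ) - n) r)) := by
  have hmn' : m ≤ n := by omega
  have hD2e : ((m:ℤ) - n) = -(((n - m : ℕ) : ℤ)) := by omega
  have hMNe : (-(M:ℤ) - N) = -(((M + N : ℕ)) : ℤ) := by push_cast; ring
  have hfac : (r.factorial : ℚ) ≠ 0 := Nat.cast_ne_zero.2 r.factorial_ne_zero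
  have hD1 : raise (-(m:ℤ)) r ≠ 0 := raise_neg_ne_zero (by omega)
  have hD2 : raise (-((n - m : ℕ):ℤ)) r ≠ 0 := raise_neg_ne_zero (by omega)
  have hMN : raise (-((M + N : ℕ):ℤ)) r ≠ 0 := raise_neg_ne_zero (by omega)
  have hsummand : ∀ i ∈ Finset.range (min M N + 1),
      (M.choose i : ℚ) * (N.choose i : ℚ) *
        ((raise (-(i:ℤ)) r * raise (-(x:ℤ)) r * raise ((x:ℤ) - n - 1) r) /
          ((r.factorial : ℚ) * raise (-(m:ℤ)) r * raise ((m:ℤ) - n) r))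
      = ((M.choose i * (N.choose i * i.choose r) : ℕ) : ℚ) *
          ((-1:ℚ)^r * (r.factorial : ℚ) *
            (raise (-(x:ℤ)) r * raise ((x:ℤ) - n - 1) r /
              ((r.factorial : ℚ) * raise (-(m:ℤ)) r * raise ((m:ℤ) - n) r))) := by
    intro i _
    rw [raise_neg_choose i r]
    push_cast
    ring
  rw [Finset.sum_congr rfl hsummand, ← Finset.sum_mul, ← Nat.cast_sum,
    star M N r hrM hrN, Nat.cast_mul]
  rw [hgTerm, hD2e, hMNe, raise_neg_choose M r, raise_neg_choose N r,
    raise_neg_choose (M + N) r]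
  rw [raise_neg_choose (M + N) r] at hMN
  have htri : (((M + N).choose M : ℚ)) * (M.choose r : ℚ)
      = ((M + N).choose r : ℚ) * (((M + N - r).choose (M - r) : ℚ)) := by
    exact_mod_cast congrArg (Nat.cast : ℕ → ℚ) (Nat.choose_mul (n := M + N) hrM)
  have hch : ((M + N).choose r : ℚ) ≠ 0 :=
    Nat.cast_ne_zero.2 (Nat.choose_pos (by omega)).ne'
  have hsign : ((-1:ℚ))^r ≠ 0 := pow_ne_zero _ (by norm_num)
  simp only [← mul_div_assoc]
  rw [div_eq_div_iff
    (by exact mul_ne_zero (mul_ne_zero (mul_ne_zero hfac hD1) hD2) hMN)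
    (mul_ne_zero (mul_ne_zero hfac hD1) hD2)]
  linear_combination ((-1:ℚ)^r * (-1:ℚ)^r * (r.factorial:ℚ)^3 * raise (-(x:ℤ)) r *
    raise ((x:ℤ) - n - 1) r * raise (-(m:ℤ)) r * raise (-(((n - m : ℕ)) : ℤ)) r * (N.choose r : ℚ)) * htri

theorem hahn_presentation'
    (n m k l x : ℕ) (hm : m ≤ n / 2) (hk : k ≤ n)
    (hl : m + k ≤ n + l) (hlm : l ≤ m) (hlk : l ≤ k) (hx : x ≤ m) :
    (Nat.choose (n - k) (m - l) : ℚ) * ((Nat.choose n x : ℚ) / (Nat.choose n m : ℚ)) *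
      (((n : ℚ) - 2 * x + 1) / ((n : ℚ) - x + 1)) *
      (∑ r ∈ Finset.range (min x (min (m - l) (n + l - m - k)) + 1),
        hgTerm n m (m - l) (n + l - m - k) (-(x : ℤ)) ((x : ℤ) - n - 1) r) =
      ((Nat.choose n x : ℚ) / (Nat.choose n m : ℚ)) *
        (((n : ℚ) - 2 * x + 1) / ((n : ℚ) - x + 1)) *
        ∑ i ∈ Finset.range (min (m - l) (n + l - m - k) + 1),
          (Nat.choose (m - l) i : ℚ) * (Nat.choose (n + l - m - k) i : ℚ) *
            ∑ r ∈ Finset.range (min i x + 1),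
              (raise (-(i : ℤ)) r * raise (-(x : ℤ)) r * raise ((x : ℤ) - n - 1) r) /
                ((Nat.factorial r : ℚ) * raise (-(m : ℤ)) r * raise ((m : ℤ) - n) r) := by
  set M := m - l with hM
  set N := n + l - m - k with hN
  have h2m : 2 * m ≤ n := by omega
  have main : (((M + N).choose M : ℕ) : ℚ) *
      ∑ r ∈ Finset.range (min x (min M N) + 1),
        hgTerm n m M N (-(x:ℤ)) ((x:ℤ) - n - 1) r
    = ∑ i ∈ Finset.range (min M N + 1),
        (M.choose i : ℚ) * (N.choose i : ℚ) *
          ∑ r ∈ Finset.range (min i x + 1),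
            (raise (-(i:ℤ)) r * raise (-(x:ℤ)) r * raise ((x:ℤ) - n - 1) r) /
              ((r.factorial : ℚ) * raise (-(m:ℤ)) r * raise ((m:ℤ) - n) r) := by
    calc (((M + N).choose M : ℕ) : ℚ) *
        ∑ r ∈ Finset.range (min x (min M N) + 1),
          hgTerm n m M N (-(x:ℤ)) ((x:ℤ) - n - 1) r
        = ∑ r ∈ Finset.range (min x (min M N) + 1),
            (((M + N).choose M : ℕ) : ℚ) * hgTerm n m M N (-(x:ℤ)) ((x:ℤ) - n - 1) r :=
          Finset.mul_sum _ _ _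
      _ = ∑ r ∈ Finset.range (min x (min M N) + 1),
            ∑ i ∈ Finset.range (min M N + 1),
              (M.choose i : ℚ) * (N.choose i : ℚ) *
                ((raise (-(i:ℤ)) r * raise (-(x:ℤ)) r * raise ((x:ℤ) - n - 1) r) /
                  ((r.factorial : ℚ) * raise (-(m:ℤ)) r * raise ((m:ℤ) - n) r)) := by
          refine Finset.sum_congr rfl fun r hr => ?_
          simp only [Finset.mem_range] at hr
          exact perR n m M N x r h2m hx (by omega) (by omega) (by omega)
      _ = ∑ i ∈ Finset.range (min M N + 1),
            ∑ r ∈ Finset.range (min x (min M N) + 1),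
              (M.choose i : ℚ) * (N.choose i : ℚ) *
                ((raise (-(i:ℤ)) r * raise (-(x:ℤ)) r * raise ((x:ℤ) - n - 1) r) /
                  ((r.factorial : ℚ) * raise (-(m:ℤ)) r * raise ((m:ℤ) - n) r)) :=
          Finset.sum_comm
      _ = ∑ i ∈ Finset.range (min M N + 1),
            (M.choose i : ℚ) * (N.choose i : ℚ) *
              ∑ r ∈ Finset.range (min i x + 1),
                (raise (-(i:ℤ)) r * raise (-(x:ℤ)) r * raise ((x:ℤ) - n - 1) r) /
                  ((r.factorial : ℚ) * raise (-(m:ℤ)) r * raise ((m:ℤ) - n) r) := by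
          refine Finset.sum_congr rfl fun i hi => ?_
          simp only [Finset.mem_range] at hi
          rw [Finset.mul_sum]
          refine (Finset.sum_subset (Finset.range_subset_range.2 (by omega)) fun r hr hnr => ?_).symm
          simp only [Finset.mem_range] at hr hnr
          rw [raise_neg_eq_zero (show i < r by omega)]
          simp
  have hc : ((n - k).choose M : ℚ) = (((M + N).choose M : ℕ) : ℚ) := by
    rw [show n - k = M + N by omega]
  rw [hc]
  linear_combination (((n.choose x : ℚ) / (n.choose m : ℚ)) *
    (((n : ℚ) - 2 * x + 1) / ((n : ℚ) - x + 1))) * main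


/-- **Theorem 4.1 (Hahn presentation).**
`p(x) = (C(n,x)/C(n,m)) ((n-2x+1)/(n-x+1)) Σ_{i=0}^{min(M,N)} C(M,i) C(N,i) ω(x;i)`,
where `ω(x;i) = ₃F₂(-i,-x,x-n-1;-m,m-n;1)` is a Hahn polynomial value. -/
theorem hahn_presentation
    (n m k l x : ℕ) (hm : m ≤ n / 2) (hk : k ≤ n)
    (hl : m + k ≤ n + l) (hlm : l ≤ m) (hlk : l ≤ k) (hx : x ≤ m) :
    pone n m k l x =
      ((Nat.choose n x : ℚ) / (Nat.choose n m : ℚ)) *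
        (((n : ℚ) - 2 * x + 1) / ((n : ℚ) - x + 1)) *
        ∑ i ∈ Finset.range (min (m - l) (n + l - m - k) + 1),
          (Nat.choose (m - l) i : ℚ) * (Nat.choose (n + l - m - k) i : ℚ) *
            ∑ r ∈ Finset.range (min i x + 1),
              (raise (-(i : ℤ)) r * raise (-(x : ℤ)) r * raise ((x : ℤ) - n - 1) r) /
                ((Nat.factorial r : ℚ) * raise (-(m : ℤ)) r * raise ((m : ℤ) - n) r) := by
  rw [pone]
  exact hahn_presentation' n m k l x hm hk hl hlm hlk hx
end

section
/- (Zonal spherical value identity, equation (4.9)) Let n, m be integers with 0 ≤ m ≤ n−m, and let i, x ∈ {0,1,…,m}. Then Σ_{r=0}^{min(i,x)} [(−i)_r (−x)_r (x−n−1)_r] / [r!·(−m)_r·(m−n)_r] = C(m,i)^{−1} · C(n−m,i)^{−1} · Σ_{r=0}^{min(i,x)} (−1)^r · C(x,r) · C(m−x,i−r) · C(n−m−x,i−r). Equivalently, the terminating ₃F₂(−i, −x, x−n−1; −m, m−n; 1) equals the displayed alternating binomial sum. -/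
open Finset

lemma raise_neg (a r : ℕ) : raise (-(a:ℤ)) r = (-1:ℚ)^r * r.factorial * a.choose r := by
  induction r with
  | zero => simp [raise]
  | succ r ih =>
    rw [raise, Finset.prod_range_succ, ← raise, ih]
    rcases lt_or_ge a r with h | h
    · rw [Nat.choose_eq_zero_of_lt h, Nat.choose_eq_zero_of_lt (by omega)]
      simp
    · have h1 := Nat.choose_succ_right_eq a r
      have h2 : ((a - r : ℕ) : ℚ) = (a : ℚ) - r := by
        have : r ≤ a := h
        push_cast [this]; ring
      have h3 : (a.choose (r+1) : ℚ) * (r+1) = (a.choose r : ℚ) * ((a:ℚ) - r) := by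
        rw [← h2]; exact_mod_cast congrArg (Nat.cast (R := ℚ)) h1
      have hfac : ((r+1).factorial : ℚ) = (r.factorial : ℚ) * (r+1) := by
        push_cast [Nat.factorial_succ]; ring
      rw [hfac]
      push_cast
      linear_combination ((-1:ℚ)^r * r.factorial) * h3

lemma trinom (n k s : ℕ) (h : s ≤ k) :
    n.choose k * k.choose s = n.choose s * (n - s).choose (k - s) := by
  rcases le_or_gt k n with hkn | hkn
  · exact Nat.choose_mul (n := n) h
  · rw [Nat.choose_eq_zero_of_lt hkn]
    rcases le_or_gt s n with hsn | hsn
    · rw [Nat.choose_eq_zero_of_lt (by omega : n - s < k - s)]; simp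
    · rw [Nat.choose_eq_zero_of_lt hsn]; simp


lemma choose_ne (p q : ℕ) (h : q ≤ p) : ((p.choose q : ℚ)) ≠ 0 :=
  Nat.cast_ne_zero.mpr (Nat.choose_pos h).ne'


lemma V1ad : ∀ K a b : ℕ, ∑ p ∈ antidiagonal K,
    (a + p.1).choose p.1 * (b + p.2).choose p.2 = (a + b + K + 1).choose K := by
  intro K
  induction K with
  | zero => intro a b; simp
  | succ K ihK =>
    intro a b
    induction b with
    | zero =>
      rw [Finset.Nat.sum_antidiagonal_succ']
      dsimp only
      have h1 : ∑ p ∈ antidiagonal K, (a + p.1).choose p.1 * ((0:ℕ) + (p.2+1)).choose (p.2+1)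
          = (a + 0 + K + 1).choose K := by
        rw [← ihK a 0]; exact Finset.sum_congr rfl fun p _ => by simp
      rw [h1]
      have hp := Nat.choose_succ_succ' (a + 0 + K + 1) K
      have e1 : a + 0 + (K+1) + 1 = (a + 0 + K + 1) + 1 := by omega
      have e2 : a + (K+1) = a + 0 + K + 1 := by omega
      rw [e1, e2, hp]
      simp only [Nat.choose_zero_right, mul_one]
      omega
    | succ b ihb =>
      rw [Finset.Nat.sum_antidiagonal_succ'] at ihb ⊢
      dsimp only at ihb ⊢
      have split : ∀ p : ℕ × ℕ, (a + p.1).choose p.1 * (b + 1 + (p.2+1)).choose (p.2+1)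
          = (a + p.1).choose p.1 * (b + 1 + p.2).choose p.2
            + (a + p.1).choose p.1 * (b + (p.2+1)).choose (p.2+1) := by
        intro p
        have e : b + 1 + (p.2+1) = (b + 1 + p.2) + 1 := by omega
        rw [e, Nat.choose_succ_succ' (b + 1 + p.2) p.2, Nat.mul_add]
        congr 3
        omega
      simp only [split, Finset.sum_add_distrib, ihK a (b+1)]
      simp only [Nat.choose_zero_right, mul_one] at ihb ⊢
      rw [show a + (b+1) + K + 1 = a + b + (K+1) + 1 by omega,
        show a + (b+1) + (K+1) + 1 = (a + b + (K+1) + 1) + 1 by omega,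
        Nat.choose_succ_succ' (a + b + (K+1) + 1) K]
      omega


/-- Range form of V1 used for `C(n+1-x, r)`. -/
lemma V1range (r N mx : ℕ) (h : r ≤ N) :
    (mx + N + 1).choose r = ∑ s ∈ range (r+1), (mx + s).choose s * (N - s).choose (r - s) := by
  have := V1ad r mx (N - r)
  rw [Finset.Nat.sum_antidiagonal_eq_sum_range_succ_mk] at this
  rw [show mx + N + 1 = mx + (N - r) + r + 1 by omega, ← this]
  apply Finset.sum_congr rfl
  intro s hs
  have hs' : s ≤ r := by simpa [Nat.lt_succ_iff] using hs
  congr 2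
  omega

lemma V2 : ∀ a M k : ℕ, a ≤ M → k ≤ M →
    ∑ u ∈ range (k+1), (-1 : ℤ)^u * a.choose u * ((M - u).choose (k - u)) = (M - a).choose k := by
  intro a
  induction a with
  | zero =>
    intro M k _ _
    rw [Finset.sum_eq_single 0]
    · simp
    · intro u _ hu
      rcases Nat.exists_eq_succ_of_ne_zero hu with ⟨v, rfl⟩
      simp [Nat.choose_eq_zero_of_lt (Nat.succ_pos v)]
    · intro h; exact absurd (Finset.mem_range.mpr (Nat.succ_pos k)) h
  | succ a ih =>
    intro M k ha hk
    rcases k with _ | j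
    · simp
    · rw [Finset.sum_range_succ']
      have step1 : ∀ v, (-1:ℤ)^(v+1) * (a+1).choose (v+1) * ((M - (v+1)).choose (j+1 - (v+1)))
          = (-1:ℤ)^(v+1) * a.choose (v+1) * ((M - (v+1)).choose (j+1 - (v+1)))
            + (-1:ℤ)^(v+1) * a.choose v * ((M - (v+1)).choose (j+1 - (v+1))) := by
        intro v
        rw [Nat.choose_succ_succ' a v]
        push_cast
        ring
      simp only [step1, Finset.sum_add_distrib]
      simp only [pow_zero, Nat.choose_zero_right, Nat.cast_one, one_mul, Nat.sub_zero]
      have part1 : (∑ v ∈ range (j+1), (-1:ℤ)^(v+1) * a.choose (v+1) * ((M - (v+1)).choose (j+1 - (v+1))))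
          + (M.choose (j+1) : ℤ) = (M - a).choose (j+1) := by
        have h := ih M (j+1) (by omega) hk
        rw [Finset.sum_range_succ'] at h
        simpa using h
      have part2 : (∑ v ∈ range (j+1), (-1:ℤ)^(v+1) * a.choose v * ((M - (v+1)).choose (j+1 - (v+1))))
          = -(((M - 1 - a).choose j : ℤ)) := by
        rw [← ih (M-1) j (by omega) (by omega), ← Finset.sum_neg_distrib]
        apply Finset.sum_congr rfl
        intro v hv
        have hv' : v ≤ j := by simpa [Nat.lt_succ_iff] using hv
        rw [show M - (v+1) = M - 1 - v by omega, show j + 1 - (v+1) = j - v by omega]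
        ring
      have pascal := Nat.choose_succ_succ' (M - a - 1) j
      have e1 : M - a - 1 + 1 = M - a := by omega
      have e2 : M - (a+1) = M - a - 1 := by omega
      have e3 : M - 1 - a = M - a - 1 := by omega
      rw [e1] at pascal
      rw [e2]
      rw [e3] at part2
      omega


lemma sum_triangle {M : Type*} [AddCommMonoid M] (n : ℕ) (f : ℕ → ℕ → M) :
    ∑ r ∈ range n, ∑ s ∈ range (r+1), f r s
      = ∑ s ∈ range n, ∑ u ∈ range (n - s), f (s+u) s := by
  induction n with
  | zero => simp
  | succ n ih =>
    rw [Finset.sum_range_succ, ih]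
    have expand : ∑ s ∈ range (n+1), ∑ u ∈ range (n+1 - s), f (s+u) s
        = ∑ s ∈ range (n+1), ((∑ u ∈ range (n - s), f (s+u) s) + f n s) := by
      apply Finset.sum_congr rfl
      intro s hs
      have hs' : s ≤ n := by simpa [Nat.lt_succ_iff] using hs
      rw [show n + 1 - s = (n - s) + 1 by omega, Finset.sum_range_succ,
        show s + (n - s) = n by omega]
    rw [expand, Finset.sum_add_distrib]
    congr 1
    rw [Finset.sum_range_succ]
    simp

/-- Chu–Vandermonde in divided form. -/
lemma CV2 (k a M : ℕ) (haM : a ≤ M) (hkM : k ≤ M) :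
    ∑ u ∈ range (k+1), (-1 : ℚ)^u * k.choose u * a.choose u / M.choose u
      = (M - a).choose k / M.choose k := by
  have hMk := choose_ne M k hkM
  have step : ∀ u ∈ range (k+1), (-1 : ℚ)^u * k.choose u * a.choose u / M.choose u
      = ((-1:ℚ)^u * a.choose u * ((M - u).choose (k - u) : ℚ)) / M.choose k := by
    intro u hu
    have hu' : u ≤ k := by simpa [Nat.lt_succ_iff] using hu
    have hMu := choose_ne M u (le_trans hu' hkM)
    have htQ : (M.choose k : ℚ) * (k.choose u) = (M.choose u) * ((M-u).choose (k-u)) := by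
      exact_mod_cast trinom M k u hu'
    field_simp
    linear_combination ((a.choose u : ℚ)) * htQ
  rw [Finset.sum_congr rfl step, ← Finset.sum_div]
  congr 1
  have h2 : ((∑ u ∈ range (k+1), (-1 : ℤ)^u * a.choose u * ((M - u).choose (k - u)) : ℤ) : ℚ)
      = (((M - a).choose k : ℤ) : ℚ) := by rw [V2 a M k haM hkM]
  push_cast at h2
  convert h2 using 2


lemma partB (n m i x : ℕ) (hm : m + m ≤ n) (hi : i ≤ m) (hx : x ≤ m) :
    ∑ s ∈ range (i+1), (-1:ℤ)^s * x.choose s * (m-x).choose (i-s) * ((n-m-x).choose (i-s))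
      = ∑ r ∈ range (i+1), (-1:ℤ)^r * x.choose r * ((m-x+r).choose i) * ((n-m-r).choose (i-r)) := by
  set N := n - m with hN
  have hxN : x ≤ N := by omega
  have hiN : i ≤ N := by omega
  set F : ℕ → ℕ → ℤ := fun r s =>
    (-1:ℤ)^r * (m-x).choose (i-s) * x.choose r * r.choose s * ((N-r).choose (i-r)) with hF
  have B1 : ∀ s ∈ range (i+1),
      (-1:ℤ)^s * x.choose s * (m-x).choose (i-s) * ((N-x).choose (i-s))
        = ∑ u ∈ range (i+1-s), F (s+u) s := by
    intro s hs
    have hsi : s ≤ i := by simpa [Nat.lt_succ_iff] using hs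
    have expand : ∀ u, F (s+u) s
        = ((-1:ℤ)^s * x.choose s * (m-x).choose (i-s)) *
            ((-1:ℤ)^u * (x-s).choose u * ((N-s-u).choose (i-s-u))) := by
      intro u
      have ht : x.choose (s+u) * (s+u).choose s = x.choose s * (x-s).choose u := by
        have := trinom x (s+u) s (Nat.le_add_right s u)
        simpa using this
      have e1 : N - (s+u) = N - s - u := by omega
      have e2 : i - (s+u) = i - s - u := by omega
      rw [hF]
      push_cast [e1, e2, pow_add]
      have htQ : ((x.choose (s+u) : ℤ)) * ((s+u).choose s) = (x.choose s) * ((x-s).choose u) := by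
        exact_mod_cast ht
      linear_combination ((-1:ℤ)^(s+u) * (m-x).choose (i-s) * ((N-s-u).choose (i-s-u))) * htQ
    rw [show i + 1 - s = (i - s) + 1 by omega]
    simp only [expand]
    rw [← Finset.mul_sum]
    rcases le_or_gt s x with hsx | hsx
    · have hv := V2 (x-s) (N-s) (i-s) (by omega) (by omega)
      rw [show (N-s) - (x-s) = N - x by omega] at hv
      rw [hv]
    · rw [Nat.choose_eq_zero_of_lt hsx]
      simp
  rw [Finset.sum_congr rfl B1, ← sum_triangle (i+1) F]
  apply Finset.sum_congr rfl
  intro r hr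
  have hri : r ≤ i := by simpa [Nat.lt_succ_iff] using hr
  have hvdm : ∑ s ∈ range (r+1), (r.choose s) * ((m-x).choose (i-s)) = (m-x+r).choose i := by
    have h1 := Nat.add_choose_eq r (m-x) i
    rw [Finset.Nat.sum_antidiagonal_eq_sum_range_succ_mk] at h1
    have h2 : ∑ s ∈ range (i+1), (r.choose s) * ((m-x).choose (i-s)) = (r+(m-x)).choose i := by
      rw [h1]
    rw [Nat.add_comm (m-x) r, ← h2]
    apply Finset.sum_subset
    · exact Finset.range_subset_range.mpr (by omega)
    · intro s _ hs
      have : r < s := by simp only [Finset.mem_range, Nat.lt_succ_iff] at hs ⊢; omega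
      rw [Nat.choose_eq_zero_of_lt this, Nat.zero_mul]
  calc ∑ s ∈ range (r+1), F r s
      = ((-1:ℤ)^r * x.choose r * ((N-r).choose (i-r))) *
          ∑ s ∈ range (r+1), ((r.choose s : ℤ)) * ((m-x).choose (i-s)) := by
        rw [Finset.mul_sum]
        apply Finset.sum_congr rfl
        intro s _
        rw [hF]
        push_cast
        ring
    _ = (-1:ℤ)^r * x.choose r * ((m-x+r).choose i) * ((N-r).choose (i-r)) := by
        have : ((∑ s ∈ range (r+1), (r.choose s) * ((m-x).choose (i-s)) : ℕ) : ℤ)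
            = (((m-x+r).choose i : ℕ) : ℤ) := congrArg _ hvdm
        push_cast at this
        rw [this]
        ring


lemma partA (n m i x : ℕ) (hm : m + m ≤ n) (hi : i ≤ m) (hx : x ≤ m) :
    ∑ r ∈ range (i+1), ((-1:ℚ)^r * (i.choose r) * (x.choose r) * ((n+1-x).choose r))
        / ((m.choose r) * ((n-m).choose r))
      = ∑ s ∈ range (i+1), ((-1:ℚ)^s * (x.choose s) * ((m-x+s).choose i)
          * ((n-m-s).choose (i-s))) / ((m.choose i) * ((n-m).choose i)) := by
  set N := n - m with hN
  have hmN : m ≤ N := by omega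
  set G : ℕ → ℕ → ℚ := fun r s =>
    ((-1:ℚ)^r * (i.choose r) * (x.choose r) * ((m-x+s).choose s) * ((N-s).choose (r-s)))
      / ((m.choose r) * (N.choose r)) with hG
  have step2 : ∀ r ∈ range (i+1),
      ((-1:ℚ)^r * (i.choose r) * (x.choose r) * ((n+1-x).choose r))
        / ((m.choose r) * (N.choose r)) = ∑ s ∈ range (r+1), G r s := by
    intro r hr
    have hri : r ≤ i := by simpa [Nat.lt_succ_iff] using hr
    have hv := V1range r N (m-x) (by omega)
    rw [show m - x + N + 1 = n + 1 - x by omega] at hv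
    have hvQ : (((n+1-x).choose r : ℕ) : ℚ)
        = ∑ s ∈ range (r+1), ((m-x+s).choose s : ℚ) * ((N-s).choose (r-s) : ℚ) := by
      rw [hv]
      push_cast
      rfl
    rw [hvQ, Finset.mul_sum, Finset.sum_div]
    exact Finset.sum_congr rfl fun t _ => by rw [hG]; ring
  have step45 : ∀ s ∈ range (i+1),
      ∑ u ∈ range (i+1-s), G (s+u) s
        = ((-1:ℚ)^s * (x.choose s) * ((m-x+s).choose i) * ((N-s).choose (i-s)))
            / ((m.choose i) * (N.choose i)) := by
    intro s hs
    have hsi : s ≤ i := by simpa [Nat.lt_succ_iff] using hs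
    -- termwise rewrite
    have term : ∀ u, u ≤ i - s → G (s+u) s
        = (((-1:ℚ)^s * (i.choose s) * (x.choose s) * ((m-x+s).choose s))
            / ((m.choose s) * (N.choose s)))
          * ((-1:ℚ)^u * ((i-s).choose u) * ((x-s).choose u) / ((m-s).choose u)) := by
      intro u hu
      have hsum : s + u ≤ i := by omega
      have g1 : (i.choose (s+u) : ℚ) * ((s+u).choose s) = (i.choose s) * ((i-s).choose u) := by
        have := trinom i (s+u) s (Nat.le_add_right s u)
        rw [show s + u - s = u by omega] at this
        exact_mod_cast this
      have g2 : (x.choose (s+u) : ℚ) * ((s+u).choose s) = (x.choose s) * ((x-s).choose u) := by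
        have := trinom x (s+u) s (Nat.le_add_right s u)
        rw [show s + u - s = u by omega] at this
        exact_mod_cast this
      have g3 : (m.choose (s+u) : ℚ) * ((s+u).choose s) = (m.choose s) * ((m-s).choose u) := by
        have := trinom m (s+u) s (Nat.le_add_right s u)
        rw [show s + u - s = u by omega] at this
        exact_mod_cast this
      have g4 : (N.choose (s+u) : ℚ) * ((s+u).choose s) = (N.choose s) * ((N-s).choose u) := by
        have := trinom N (s+u) s (Nat.le_add_right s u)
        rw [show s + u - s = u by omega] at this
        exact_mod_cast this
      have hK : ((s+u).choose s : ℚ) ≠ 0 := choose_ne _ _ (Nat.le_add_right s u)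
      have key2 : ((s+u).choose s : ℚ)^2 *
          ((i.choose (s+u)) * (x.choose (s+u)) * ((N-s).choose u)
            * ((m.choose s) * (N.choose s) * ((m-s).choose u)))
          = ((s+u).choose s : ℚ)^2 *
          ((i.choose s) * (x.choose s) * ((i-s).choose u) * ((x-s).choose u)
            * ((m.choose (s+u)) * (N.choose (s+u)))) := by
        linear_combination
          ((x.choose (s+u) : ℚ) * ((s+u).choose s) * ((N-s).choose u) * (m.choose s)
            * (N.choose s) * ((m-s).choose u)) * g1
          + ((i.choose s : ℚ) * ((i-s).choose u) * ((N-s).choose u) * (m.choose s)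
            * (N.choose s) * ((m-s).choose u)) * g2
          - ((i.choose s : ℚ) * (x.choose s) * ((i-s).choose u) * ((x-s).choose u)
            * (N.choose (s+u)) * ((s+u).choose s)) * g3
          - ((i.choose s : ℚ) * (x.choose s) * ((i-s).choose u) * ((x-s).choose u)
            * (m.choose s) * ((m-s).choose u)) * g4
      have key := mul_left_cancel₀ (pow_ne_zero 2 hK) key2
      rw [hG]
      dsimp only
      rw [show s + u - s = u by omega, pow_add]
      have d1 : (m.choose (s+u) : ℚ) ≠ 0 := choose_ne _ _ (by omega)
      have d2 : (N.choose (s+u) : ℚ) ≠ 0 := choose_ne _ _ (by omega)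
      have d3 : (m.choose s : ℚ) ≠ 0 := choose_ne _ _ (by omega)
      have d4 : (N.choose s : ℚ) ≠ 0 := choose_ne _ _ (by omega)
      have d5 : ((m-s).choose u : ℚ) ≠ 0 := choose_ne _ _ (by omega)
      rw [div_mul_div_comm, div_eq_div_iff (mul_ne_zero d1 d2) (mul_ne_zero (mul_ne_zero d3 d4) d5)]
      linear_combination ((-1:ℚ)^s * (-1:ℚ)^u * ((m-x+s).choose s : ℚ)) * key
    rw [show i + 1 - s = (i - s) + 1 by omega,
      Finset.sum_congr rfl (fun u hu => term u (by simpa [Nat.lt_succ_iff] using hu)),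
      ← Finset.mul_sum]
    rcases le_or_gt s x with hsx | hsx
    · rw [CV2 (i-s) (x-s) (m-s) (by omega) (by omega),
        show m - s - (x - s) = m - x by omega]
      have hCis : (i.choose s : ℚ) ≠ 0 := choose_ne _ _ hsi
      have h1 : (m.choose i : ℚ) * (i.choose s) = (m.choose s) * ((m-s).choose (i-s)) := by
        exact_mod_cast trinom m i s hsi
      have h2 : (N.choose i : ℚ) * (i.choose s) = (N.choose s) * ((N-s).choose (i-s)) := by
        exact_mod_cast trinom N i s hsi
      have h3 : ((m-x+s).choose i : ℚ) * (i.choose s)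
          = ((m-x+s).choose s) * ((m-x).choose (i-s)) := by
        have := trinom (m-x+s) i s hsi
        rw [show m - x + s - s = m - x by omega] at this
        exact_mod_cast this
      have key5' : (i.choose s : ℚ) * ((i.choose s) * (x.choose s) * ((m-x+s).choose s)
            * ((m-x).choose (i-s)) * ((m.choose i) * (N.choose i)))
          = (i.choose s : ℚ) * ((x.choose s) * ((m-x+s).choose i) * ((N-s).choose (i-s))
            * ((m.choose s) * (N.choose s) * ((m-s).choose (i-s)))) := by
        linear_combination ((x.choose s : ℚ) * ((m-x+s).choose s) * ((m-x).choose (i-s))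
            * (N.choose i) * (i.choose s)) * h1
          + ((x.choose s : ℚ) * ((m-x+s).choose s) * ((m-x).choose (i-s)) * (m.choose s)
            * ((m-s).choose (i-s))) * h2
          - ((x.choose s : ℚ) * ((N-s).choose (i-s)) * (m.choose s) * (N.choose s)
            * ((m-s).choose (i-s))) * h3
      have key5 := mul_left_cancel₀ hCis key5'
      have dmi : (m.choose i : ℚ) ≠ 0 := choose_ne _ _ hi
      have dNi : (N.choose i : ℚ) ≠ 0 := choose_ne _ _ (by omega)
      have dms : (m.choose s : ℚ) ≠ 0 := choose_ne _ _ (by omega)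
      have dNs : (N.choose s : ℚ) ≠ 0 := choose_ne _ _ (by omega)
      have dmsis : ((m-s).choose (i-s) : ℚ) ≠ 0 := choose_ne _ _ (by omega)
      rw [div_mul_div_comm,
        div_eq_div_iff (mul_ne_zero (mul_ne_zero dms dNs) dmsis) (mul_ne_zero dmi dNi)]
      linear_combination ((-1:ℚ)^s) * key5
    · simp [Nat.choose_eq_zero_of_lt hsx]
  rw [Finset.sum_congr rfl step2, sum_triangle (i+1) G, Finset.sum_congr rfl step45]


/-- **Zonal spherical value identity (equation (4.9)).**
For integers `0 ≤ m ≤ n - m` and `i, x ∈ {0,…,m}`, the terminating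
`₃F₂(-i,-x,x-n-1;-m,m-n;1)` equals
`C(m,i)⁻¹ C(n-m,i)⁻¹ Σ_{r=0}^{min(i,x)} (-1)^r C(x,r) C(m-x,i-r) C(n-m-x,i-r)`. -/
theorem zonal_spherical_value (n m i x : ℕ) (hm : m ≤ n - m) (hi : i ≤ m) (hx : x ≤ m) :
    ∑ r ∈ Finset.range (min i x + 1),
        (raise (-(i : ℤ)) r * raise (-(x : ℤ)) r * raise ((x : ℤ) - n - 1) r) /
          ((Nat.factorial r : ℚ) * raise (-(m : ℤ)) r * raise ((m : ℤ) - n) r) =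
      (Nat.choose m i : ℚ)⁻¹ * (Nat.choose (n - m) i : ℚ)⁻¹ *
        ∑ r ∈ Finset.range (min i x + 1),
          (-1 : ℚ) ^ r * (Nat.choose x r : ℚ) * (Nat.choose (m - x) (i - r) : ℚ) *
            (Nat.choose (n - m - x) (i - r) : ℚ) := by
  have hm2 : m + m ≤ n := by omega
  -- extend LHS sum to range (i+1)
  have ext1 : ∑ r ∈ Finset.range (min i x + 1),
        (raise (-(i : ℤ)) r * raise (-(x : ℤ)) r * raise ((x : ℤ) - n - 1) r) /
          ((Nat.factorial r : ℚ) * raise (-(m : ℤ)) r * raise ((m : ℤ) - n) r)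
      = ∑ r ∈ Finset.range (i + 1),
        (raise (-(i : ℤ)) r * raise (-(x : ℤ)) r * raise ((x : ℤ) - n - 1) r) /
          ((Nat.factorial r : ℚ) * raise (-(m : ℤ)) r * raise ((m : ℤ) - n) r) := by
    apply Finset.sum_subset (Finset.range_subset_range.mpr (by omega))
    intro r hr hnr
    have hxr : x < r := by
      simp only [Finset.mem_range] at hr hnr
      omega
    rw [raise_neg x r, Nat.choose_eq_zero_of_lt hxr]
    simp
  have ext2 : ∑ r ∈ Finset.range (min i x + 1),
        (-1 : ℚ) ^ r * (Nat.choose x r : ℚ) * (Nat.choose (m - x) (i - r) : ℚ) *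
            (Nat.choose (n - m - x) (i - r) : ℚ)
      = ∑ r ∈ Finset.range (i + 1),
        (-1 : ℚ) ^ r * (Nat.choose x r : ℚ) * (Nat.choose (m - x) (i - r) : ℚ) *
            (Nat.choose (n - m - x) (i - r) : ℚ) := by
    apply Finset.sum_subset (Finset.range_subset_range.mpr (by omega))
    intro r hr hnr
    have hxr : x < r := by
      simp only [Finset.mem_range] at hr hnr
      omega
    rw [Nat.choose_eq_zero_of_lt hxr]
    simp
  rw [ext1, ext2]
  have conv : ∀ r ∈ Finset.range (i+1),
      (raise (-(i : ℤ)) r * raise (-(x : ℤ)) r * raise ((x : ℤ) - n - 1) r) /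
          ((Nat.factorial r : ℚ) * raise (-(m : ℤ)) r * raise ((m : ℤ) - n) r)
        = ((-1:ℚ)^r * (i.choose r) * (x.choose r) * ((n+1-x).choose r))
            / ((m.choose r) * ((n-m).choose r)) := by
    intro r hr
    have hri : r ≤ i := by simpa [Nat.lt_succ_iff] using hr
    have e1 : ((x:ℤ) - n - 1) = -(((n+1-x : ℕ)) : ℤ) := by
      rw [Nat.cast_sub (by omega : x ≤ n+1)]
      push_cast
      ring
    have e2 : ((m:ℤ) - n) = -(((n-m : ℕ)) : ℤ) := by
      rw [Nat.cast_sub (by omega : m ≤ n)]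
      ring
    rw [e1, e2, raise_neg, raise_neg, raise_neg, raise_neg, raise_neg]
    have df : ((r.factorial : ℚ)) ≠ 0 := Nat.cast_ne_zero.mpr r.factorial_ne_zero
    have dm : ((m.choose r : ℚ)) ≠ 0 := Nat.cast_ne_zero.mpr (Nat.choose_pos (by omega)).ne'
    have dN : (((n-m).choose r : ℚ)) ≠ 0 := Nat.cast_ne_zero.mpr (Nat.choose_pos (by omega)).ne'
    have dsgn : ((-1:ℚ)^r) ≠ 0 := pow_ne_zero r (by norm_num)
    rw [div_eq_div_iff (by
        refine mul_ne_zero (mul_ne_zero df ?_) ?_ <;>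
          exact mul_ne_zero (mul_ne_zero dsgn df) (by assumption))
      (mul_ne_zero dm dN)]
    ring
  rw [Finset.sum_congr rfl conv, partA n m i x hm2 hi hx]
  -- now handle RHS
  have hBZ := partB n m i x hm2 hi hx
  have hBQ : ∑ r ∈ Finset.range (i + 1),
        (-1 : ℚ) ^ r * (Nat.choose x r : ℚ) * (Nat.choose (m - x) (i - r) : ℚ) *
            (Nat.choose (n - m - x) (i - r) : ℚ)
      = ∑ r ∈ Finset.range (i+1), (-1:ℚ)^r * (x.choose r) * (((m-x+r).choose i : ℚ))
          * (((n-m-r).choose (i-r) : ℚ)) := by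
    have := congrArg (fun z : ℤ => (z : ℚ)) hBZ
    push_cast at this
    convert this using 2
  rw [hBQ, Finset.mul_sum]
  apply Finset.sum_congr rfl
  intro s _
  field_simp
end

section
/- (Vanishing lemma; Lemma 5.3) For every parameter tuple (n,m,k,l) as in the context, every x ∈ {0,1,…,m} with x > k, and every real number q with q > 0 and q ≠ 1, one has p(x;q) = 0. -/
open Finset

namespace VL

noncomputable def P (q : ℝ) (j : ℕ) : ℝ := ∏ i ∈ Finset.range j, (1 - q ^ (i + 1))

lemma P_succ (q : ℝ) (j : ℕ) : P q (j + 1) = P q j * (1 - q ^ (j + 1)) :=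
  Finset.prod_range_succ _ _

lemma pow_ne_one {q : ℝ} (hq : 0 < q) (hq1 : q ≠ 1) {i : ℕ} (hi : i ≠ 0) : q ^ i ≠ 1 := by
  rcases lt_or_gt_of_ne hq1 with h | h
  · exact ne_of_lt (pow_lt_one₀ hq.le h (by omega))
  · exact ne_of_gt (one_lt_pow₀ h (by omega))

lemma one_sub_pow_ne {q : ℝ} (hq : 0 < q) (hq1 : q ≠ 1) {i : ℕ} (hi : i ≠ 0) :
    1 - q ^ i ≠ 0 :=
  sub_ne_zero.mpr fun h => (pow_ne_one hq hq1 hi) h.symm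

lemma P_ne_zero {q : ℝ} (hq : 0 < q) (hq1 : q ≠ 1) (j : ℕ) : P q j ≠ 0 := by
  refine Finset.prod_ne_zero_iff.mpr fun i _ => ?_
  have : 1 - q ^ (i+1) ≠ 0 := one_sub_pow_ne hq hq1 (by omega)
  simpa [sub_ne_zero, eq_comm] using this

lemma P_mul_prod (q : ℝ) (a b : ℕ) :
    P q a * ∏ t ∈ Finset.range b, (1 - q ^ (a + 1 + t)) = P q (a + b) := by
  induction b with
  | zero => simp
  | succ b ih =>
      have h1 : a + 1 + b = (a + b) + 1 := by omega
      have h2 : a + (b + 1) = (a + b) + 1 := by omega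
      rw [Finset.prod_range_succ, ← mul_assoc, ih, h1, h2, P_succ]

noncomputable def e (q : ℝ) (r : ℕ) : ℝ := (-1 : ℝ) ^ r * q ^ (r * (r - 1) / 2)

lemma e_succ (q : ℝ) (r : ℕ) : e q (r + 1) = -(q ^ r * e q r) := by
  have h : (r + 1) * r / 2 = r * (r - 1) / 2 + r := by
    have h2 : 2 ∣ r * (r - 1) := Nat.even_mul_pred_self r |>.two_dvd
    rcases h2 with ⟨c, hc⟩
    cases r with
    | zero => simp
    | succ s =>
        simp only [Nat.add_sub_cancel] at hc ⊢
        have h3 : (s + 1 + 1) * (s + 1) = (s + 1) * s + 2 * (s + 1) := by ring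
        omega
  rw [e, e, Nat.add_sub_cancel, h, pow_add, pow_succ]
  ring

noncomputable def B (q : ℝ) (x r : ℕ) : ℝ :=
  if r ≤ x then P q x / (P q r * P q (x - r)) else 0


lemma P_zero (q : ℝ) : P q 0 = 1 := by simp [P]

variable {q : ℝ} (hq : 0 < q) (hq1 : q ≠ 1)


include hq hq1 in
lemma B_zero (x : ℕ) : B q x 0 = 1 := by
  rw [B, if_pos (Nat.zero_le x), Nat.sub_zero, P_zero, one_mul, div_self (P_ne_zero hq hq1 x)]

lemma B_top (x r : ℕ) (h : x < r) : B q x r = 0 := by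
  simp [B, Nat.not_le.mpr h]

include hq hq1 in
lemma B_succ_succ (x r : ℕ) : B q (x + 1) (r + 1) = q ^ (r + 1) * B q x (r + 1) + B q x r := by
  rcases Nat.lt_trichotomy r x with h | h | h
  · have hr1x : r + 1 ≤ x := h
    simp only [B, if_pos (by omega : r + 1 ≤ x + 1), if_pos hr1x, if_pos (le_of_lt h)]
    have h1 : x + 1 - (r + 1) = x - r := by omega
    have h2 : x - (r + 1) = (x - r) - 1 := by omega
    have h3 : x - r = ((x - r) - 1) + 1 := by omega
    rw [h1, h2, P_succ q x, P_succ q r]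
    rw [h3] at h1 ⊢
    rw [P_succ q (x - r - 1)]
    have e1 : (1 : ℝ) - q ^ (x + 1) = q ^ (r + 1) * (1 - q ^ (x - r - 1 + 1)) + (1 - q ^ (r + 1)) := by
      have hpow : q ^ (r + 1) * q ^ (x - r - 1 + 1) = q ^ (x + 1) := by
        rw [← pow_add]; congr 1; omega
      linear_combination hpow
    have n1 := P_ne_zero hq hq1 x
    have n2 := P_ne_zero hq hq1 r
    have n3 := P_ne_zero hq hq1 (x - r - 1)
    have n4 : (1:ℝ) - q ^ (r + 1) ≠ 0 := by
      have := P_ne_zero hq hq1 (r + 1); rw [P_succ] at this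
      exact fun hh => this (by rw [hh, mul_zero])
    have n5 : (1:ℝ) - q ^ (x - r - 1 + 1) ≠ 0 := by
      have := P_ne_zero hq hq1 (x - r - 1 + 1); rw [P_succ] at this
      exact fun hh => this (by rw [hh, mul_zero])
    rw [e1]
    generalize x - r - 1 = s at n3 n5 ⊢
    field_simp
    rw [Nat.add_sub_cancel]
    field_simp
  · subst h
    simp only [B, if_pos (le_refl (r + 1)), if_neg (by omega : ¬ r + 1 ≤ r), if_pos (le_refl r),
      Nat.sub_self, P_zero, mul_one]
    rw [div_self (P_ne_zero hq hq1 (r + 1)), div_self (P_ne_zero hq hq1 r)]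
    ring
  · simp only [B, if_neg (by omega : ¬ r + 1 ≤ x + 1), if_neg (by omega : ¬ r + 1 ≤ x),
      if_neg (by omega : ¬ r ≤ x)]
    ring

include hq hq1 in
lemma gauss (x : ℕ) (z : ℝ) :
    ∑ r ∈ Finset.range (x + 1), e q r * B q x r * z ^ r
      = ∏ i ∈ Finset.range x, (1 - z * q ^ i) := by
  induction x generalizing z with
  | zero => simp [e, B, P_zero]
  | succ x ih =>
    calc ∑ r ∈ Finset.range (x + 2), e q r * B q (x+1) r * z ^ r
        = (∑ r ∈ Finset.range (x + 1), e q (r+1) * B q (x+1) (r+1) * z ^ (r+1))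
            + e q 0 * B q (x+1) 0 * z ^ 0 := Finset.sum_range_succ' _ _
      _ = (∑ r ∈ Finset.range (x + 1),
            (e q (r+1) * (q ^ (r+1) * B q x (r+1)) * z ^ (r+1)
              + (-z) * (e q r * B q x r * (z * q) ^ r)))
            + e q 0 * (q ^ 0 * B q x 0) * z ^ 0 := by
          congr 1
          · refine Finset.sum_congr rfl fun r _ => ?_
            rw [B_succ_succ hq hq1, e_succ, mul_pow, pow_succ]
            ring
          · simp [B_zero hq hq1]
      _ = ((∑ r ∈ Finset.range (x + 1), e q (r+1) * (q ^ (r+1) * B q x (r+1)) * z ^ (r+1))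
            + e q 0 * (q ^ 0 * B q x 0) * z ^ 0)
            + (-z) * ∑ r ∈ Finset.range (x + 1), e q r * B q x r * (z * q) ^ r := by
          rw [Finset.sum_add_distrib, Finset.mul_sum]
          ring
      _ = (∑ r ∈ Finset.range (x + 2), e q r * (q ^ r * B q x r) * z ^ r)
            + (-z) * ∑ r ∈ Finset.range (x + 1), e q r * B q x r * (z * q) ^ r := by
          rw [Finset.sum_range_succ' (fun r => e q r * (q ^ r * B q x r) * z ^ r)]
      _ = (∑ r ∈ Finset.range (x + 1), e q r * B q x r * (z * q) ^ r)
            + (-z) * ∑ r ∈ Finset.range (x + 1), e q r * B q x r * (z * q) ^ r := by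
          rw [Finset.sum_range_succ, B_top (h := by omega)]
          simp only [mul_zero, zero_mul, add_zero]
          refine congrArg₂ _ (Finset.sum_congr rfl fun r _ => ?_) rfl
          rw [mul_pow]; ring
      _ = (1 - z) * ∑ r ∈ Finset.range (x + 1), e q r * B q x r * (z * q) ^ r := by ring
      _ = (1 - z) * ∏ i ∈ Finset.range x, (1 - (z * q) * q ^ i) := by rw [ih]
      _ = ∏ i ∈ Finset.range (x + 1), (1 - z * q ^ i) := by
          rw [Finset.prod_range_succ' (fun i => 1 - z * q ^ i)]
          simp only [pow_zero, mul_one]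
          rw [mul_comm]
          refine congrArg₂ _ (Finset.prod_congr rfl fun i _ => ?_) rfl
          rw [pow_succ]; ring

include hq in
lemma e_ne_zero (r : ℕ) : e q r ≠ 0 := by
  have : q ^ (r * (r - 1) / 2) ≠ 0 := pow_ne_zero _ (ne_of_gt hq)
  simp [e, this]

include hq hq1 in
lemma qpoch_inv (a r : ℕ) (h : r ≤ a) :
    qpoch ((q ^ a)⁻¹) q r = e q r / q ^ (a * r) * (P q a / P q (a - r)) := by
  induction r with
  | zero => simp [qpoch, e, div_self (P_ne_zero hq hq1 a)]
  | succ r ih =>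
      have hr : r ≤ a := by omega
      rw [qpoch, Finset.prod_range_succ, ← qpoch, ih hr, e_succ]
      have h1 : a - r = (a - (r + 1)) + 1 := by omega
      have h2 : P q (a - r) = P q (a - (r + 1)) * (1 - q ^ (a - (r+1) + 1)) := by
        rw [h1, P_succ]
      have key : q ^ r * q ^ (a - (r+1) + 1) = q ^ a := by
        have h3 : r + (a - (r+1) + 1) = a := by omega
        rw [← pow_add, h3]
      have key2 : q ^ (a * (r + 1)) = q ^ (a * r) * q ^ a := by
        have h3 : a * (r + 1) = a * r + a := by ring
        rw [h3, pow_add]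
      have n1 := P_ne_zero hq hq1 (a - (r + 1))
      have n2 : (1:ℝ) - q ^ (a - (r+1) + 1) ≠ 0 := by
        have := P_ne_zero hq hq1 (a - (r+1) + 1); rw [P_succ] at this
        exact fun hh => this (by rw [hh, mul_zero])
      have n3 : q ^ a ≠ 0 := pow_ne_zero _ (ne_of_gt hq)
      have n4 : q ^ (a * r) ≠ 0 := pow_ne_zero _ (ne_of_gt hq)
      have n5 := P_ne_zero hq hq1 a
      have step : 1 - (q ^ a)⁻¹ * q ^ r = -(q ^ r / q ^ a) * (1 - q ^ (a - (r+1) + 1)) := by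
        field_simp
        linear_combination -key
      rw [h2, step, key2]
      field_simp

lemma qpoch_q (r : ℕ) : qpoch q q r = P q r := by
  unfold qpoch P
  exact Finset.prod_congr rfl fun i _ => by rw [← pow_succ']


include hq in
lemma pow_mul_inv_pow (c r : ℕ) (h : r ≤ c) : q ^ c * (q⁻¹) ^ r = q ^ (c - r) := by
  have h1 : c = (c - r) + r := by omega
  rw [h1, pow_add, mul_assoc, ← mul_pow, mul_inv_cancel₀ (ne_of_gt hq), one_pow, mul_one,
    Nat.add_sub_cancel]

include hq hq1 in
lemma prod_P (a b : ℕ) :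
    ∏ t ∈ Finset.range b, (1 - q ^ (a + 1 + t)) = P q (a + b) / P q a := by
  rw [eq_div_iff (P_ne_zero hq hq1 a), mul_comm]
  exact P_mul_prod q a b

include hq hq1 in
lemma prod_shift (a b r : ℕ) (h : r ≤ a) :
    ∏ t ∈ Finset.range b, (1 - q ^ (a + 1 + t) * (q⁻¹) ^ r)
      = P q (a - r + b) / P q (a - r) := by
  rw [← prod_P hq hq1]
  refine Finset.prod_congr rfl fun t _ => ?_
  rw [pow_mul_inv_pow hq _ _ (by omega)]
  have h2 : a + 1 + t - r = a - r + 1 + t := by omega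
  rw [h2]

lemma alg (E Qr Qm Qnm QMN Qx Qnx QM QN Px Pnx PM PN Pm Pnm PMN Pr Pxr Pnxr PMr PNr Pmr Pnmr
    PMNr : ℝ)
    (hE : E ≠ 0) (hQm : Qm ≠ 0) (hQnm : Qnm ≠ 0) (hQMN : QMN ≠ 0) (hQx : Qx ≠ 0)
    (hQnx : Qnx ≠ 0) (hQM : QM ≠ 0) (hQN : QN ≠ 0)
    (hPm : Pm ≠ 0) (hPnm : Pnm ≠ 0) (hPMN : PMN ≠ 0)
    (hPr : Pr ≠ 0) (hPxr : Pxr ≠ 0) (hPnxr : Pnxr ≠ 0) (hPMr : PMr ≠ 0) (hPNr : PNr ≠ 0)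
    (hPmr : Pmr ≠ 0) (hPnmr : Pnmr ≠ 0) (hPMNr : PMNr ≠ 0)
    (hpows : Qr * (Qm * (Qnm * QMN)) = Qx * (Qnx * (QM * QN))) :
    (E / Qx * (Px / Pxr) * (E / Qnx * (Pnx / Pnxr)) * (E / QM * (PM / PMr)) *
        (E / QN * (PN / PNr)) * Qr) /
      (Pr * (E / Qm * (Pm / Pmr)) * (E / Qnm * (Pnm / Pnmr)) * (E / QMN * (PMN / PMNr)))
      = Pnx * PM * PN / (Pm * Pnm * PMN) *
        (E * (Px / (Pr * Pxr)) * (Pmr / PMr * (Pnmr / PNr * (PMNr / Pnxr)))) := by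
  have h2 : Qr = Qx * (Qnx * (QM * QN)) / (Qm * (Qnm * QMN)) := by
    field_simp
    linear_combination hpows
  rw [h2]
  field_simp

include hq hq1 in
lemma glue (n m k l x r : ℕ)
    (h2m : 2 * m ≤ n) (hxm : x ≤ m) (hkx : k < x) (hlk : l ≤ k) (hlm : l ≤ m)
    (hl : m + k ≤ n + l)
    (hrx : r ≤ x) (hrM : r ≤ m - l) (hrN : r ≤ n + l - m - k) :
    hypTerm q n m (m - l) (n + l - m - k) (-(x : ℤ)) ((x : ℤ) - n - 1) r
      = (P q (n + 1 - x) * P q (m - l) * P q (n + l - m - k)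
          / (P q m * P q (n - m) * P q ((m - l) + (n + l - m - k))))
        * (e q r * B q x r *
           ((∏ t ∈ Finset.range l, (1 - q ^ ((m - l) + 1 + t) * (q⁻¹) ^ r)) *
            ((∏ t ∈ Finset.range (k - l), (1 - q ^ ((n + l - m - k) + 1 + t) * (q⁻¹) ^ r)) *
             (∏ t ∈ Finset.range (x - k - 1), (1 - q ^ ((n + 1 - x) + 1 + t) * (q⁻¹) ^ r))))) := by
  set M := m - l with hM
  set N := n + l - m - k with hN
  have hxn : x + k < n := by omega
  -- zpow rewrites
  have z1 : q ^ (-(x : ℤ)) = (q ^ x)⁻¹ := by rw [zpow_neg, zpow_natCast]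
  have z2 : q ^ ((x : ℤ) - n - 1) = (q ^ (n + 1 - x))⁻¹ := by
    rw [show (x : ℤ) - n - 1 = -((n + 1 - x : ℕ) : ℤ) by omega, zpow_neg, zpow_natCast]
  have z3 : q ^ (-(M : ℤ)) = (q ^ M)⁻¹ := by rw [zpow_neg, zpow_natCast]
  have z4 : q ^ (-(N : ℤ)) = (q ^ N)⁻¹ := by rw [zpow_neg, zpow_natCast]
  have z5 : q ^ (-(m : ℤ)) = (q ^ m)⁻¹ := by rw [zpow_neg, zpow_natCast]
  have z6 : q ^ ((m : ℤ) - n) = (q ^ (n - m))⁻¹ := by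
    rw [show (m : ℤ) - n = -((n - m : ℕ) : ℤ) by omega, zpow_neg, zpow_natCast]
  have z7 : q ^ (-(M : ℤ) - N) = (q ^ (M + N))⁻¹ := by
    rw [show -(M : ℤ) - N = -((M + N : ℕ) : ℤ) by omega, zpow_neg, zpow_natCast]
  rw [hypTerm, z1, z2, z3, z4, z5, z6, z7, qpoch_q,
    qpoch_inv hq hq1 x r hrx,
    qpoch_inv hq hq1 (n + 1 - x) r (by omega),
    qpoch_inv hq hq1 M r hrM,
    qpoch_inv hq hq1 N r hrN,
    qpoch_inv hq hq1 m r (by omega),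
    qpoch_inv hq hq1 (n - m) r (by omega),
    qpoch_inv hq hq1 (M + N) r (by omega)]
  rw [prod_shift hq hq1 M l r hrM, prod_shift hq hq1 N (k - l) r hrN,
    prod_shift hq hq1 (n + 1 - x) (x - k - 1) r (by omega)]
  rw [show M - r + l = m - r by omega, show N - r + (k - l) = n - m - r by omega,
    show n + 1 - x - r + (x - k - 1) = (M + N) - r by omega]
  rw [B, if_pos hrx]
  -- power bookkeeping
  have hexp : r + (m * r + ((n - m) * r + (M + N) * r))
      = x * r + ((n + 1 - x) * r + (M * r + N * r)) := by
    have hs : 1 + (m + ((n - m) + (M + N))) = x + ((n + 1 - x) + (M + N)) := by omega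
    calc r + (m * r + ((n - m) * r + (M + N) * r))
        = (1 + (m + ((n - m) + (M + N)))) * r := by ring
      _ = (x + ((n + 1 - x) + (M + N))) * r := by rw [hs]
      _ = x * r + ((n + 1 - x) * r + (M * r + N * r)) := by ring
  have hpows : q ^ r * (q ^ (m * r) * (q ^ ((n - m) * r) * q ^ ((M + N) * r)))
      = q ^ (x * r) * (q ^ ((n + 1 - x) * r) * (q ^ (M * r) * q ^ (N * r))) := by
    calc q ^ r * (q ^ (m * r) * (q ^ ((n - m) * r) * q ^ ((M + N) * r)))
        = q ^ (r + (m * r + ((n - m) * r + (M + N) * r))) := by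
          rw [pow_add, pow_add, pow_add]
      _ = q ^ (x * r + ((n + 1 - x) * r + (M * r + N * r))) := by rw [hexp]
      _ = q ^ (x * r) * (q ^ ((n + 1 - x) * r) * (q ^ (M * r) * q ^ (N * r))) := by
          rw [pow_add, pow_add, pow_add]
  exact alg _ _ _ _ _ _ _ _ _ _ _ _ _ _ _ _ _ _ _ _ _ _ _ _
    (e_ne_zero hq r) (pow_ne_zero _ (ne_of_gt hq)) (pow_ne_zero _ (ne_of_gt hq))
    (pow_ne_zero _ (ne_of_gt hq)) (pow_ne_zero _ (ne_of_gt hq)) (pow_ne_zero _ (ne_of_gt hq))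
    (pow_ne_zero _ (ne_of_gt hq)) (pow_ne_zero _ (ne_of_gt hq))
    (P_ne_zero hq hq1 m) (P_ne_zero hq hq1 (n - m)) (P_ne_zero hq hq1 (M + N))
    (P_ne_zero hq hq1 r) (P_ne_zero hq hq1 (x - r)) (P_ne_zero hq hq1 (n + 1 - x - r))
    (P_ne_zero hq hq1 (M - r)) (P_ne_zero hq hq1 (N - r)) (P_ne_zero hq hq1 (m - r))
    (P_ne_zero hq hq1 (n - m - r)) (P_ne_zero hq hq1 (M + N - r)) hpows

include hq hq1 in
lemma poly_vanish (x : ℕ) (p : Polynomial ℝ) (hp : p.natDegree < x) :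
    ∑ r ∈ Finset.range (x + 1), e q r * B q x r * Polynomial.eval ((q⁻¹) ^ r) p = 0 := by
  calc ∑ r ∈ Finset.range (x + 1), e q r * B q x r * Polynomial.eval ((q⁻¹) ^ r) p
      = ∑ r ∈ Finset.range (x + 1), ∑ j ∈ Finset.range x,
          p.coeff j * (e q r * B q x r * ((q⁻¹) ^ j) ^ r) := by
        refine Finset.sum_congr rfl fun r _ => ?_
        rw [Polynomial.eval_eq_sum_range' hp, Finset.mul_sum]
        refine Finset.sum_congr rfl fun j _ => ?_
        rw [← pow_mul, ← pow_mul, Nat.mul_comm r j]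
        ring
    _ = ∑ j ∈ Finset.range x, p.coeff j *
          ∑ r ∈ Finset.range (x + 1), e q r * B q x r * ((q⁻¹) ^ j) ^ r := by
        rw [Finset.sum_comm]
        exact Finset.sum_congr rfl fun j _ => (Finset.mul_sum _ _ _).symm
    _ = 0 := Finset.sum_eq_zero fun j hj => by
        rw [gauss hq hq1 x ((q⁻¹) ^ j),
          Finset.prod_eq_zero (Finset.mem_range.mpr (Finset.mem_range.mp hj))
            (by rw [show (q⁻¹) ^ j * q ^ j = 1 by
                rw [← mul_pow, inv_mul_cancel₀ (ne_of_gt hq), one_pow], sub_self]),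
          mul_zero]

lemma deg_le_one (c : ℝ) : (1 - Polynomial.C c * Polynomial.X : Polynomial ℝ).natDegree ≤ 1 := by
  refine le_trans (Polynomial.natDegree_sub_le _ _) ?_
  simp only [Polynomial.natDegree_one, max_le_iff]
  exact ⟨Nat.zero_le _, le_trans (Polynomial.natDegree_C_mul_le _ _) Polynomial.natDegree_X_le⟩


end VL

open VL in
/-- **Lemma 5.3 (vanishing lemma).**
For every parameter tuple `(n,m,k,l)` as in the context, every `x ∈ {0,…,m}` with
`x > k`, and every real `q > 0` with `q ≠ 1`, one has `p(x;q) = 0`. -/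
theorem vanishing_lemma
    (n m k l x : ℕ) (hm : m ≤ n / 2) (hk : k ≤ n)
    (hl : m + k ≤ n + l) (hlm : l ≤ m) (hlk : l ≤ k)
    (hx : x ≤ m) (hxk : k < x)
    (q : ℝ) (hq : 0 < q) (hq1 : q ≠ 1) :
    pq q n m k l x = 0 := by
  have h2m : 2 * m ≤ n := by omega
  set M := m - l with hM
  set N := n + l - m - k with hN
  have hsum : ∑ r ∈ Finset.range (min x (min M N) + 1),
      hypTerm q n m M N (-(x : ℤ)) ((x : ℤ) - n - 1) r = 0 := by
    set p : Polynomial ℝ :=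
      (∏ t ∈ Finset.range l, (1 - Polynomial.C (q ^ (M + 1 + t)) * Polynomial.X)) *
      ((∏ t ∈ Finset.range (k - l), (1 - Polynomial.C (q ^ (N + 1 + t)) * Polynomial.X)) *
       (∏ t ∈ Finset.range (x - k - 1),
          (1 - Polynomial.C (q ^ ((n + 1 - x) + 1 + t)) * Polynomial.X))) with hp
    have hdeg : p.natDegree < x := by
      have d1 : (∏ t ∈ Finset.range l,
          (1 - Polynomial.C (q ^ (M + 1 + t)) * Polynomial.X)).natDegree ≤ l := by
        refine le_trans (Polynomial.natDegree_prod_le _ _) ?_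
        refine le_trans (Finset.sum_le_sum fun t _ => deg_le_one _) ?_
        simp
      have d2 : (∏ t ∈ Finset.range (k - l),
          (1 - Polynomial.C (q ^ (N + 1 + t)) * Polynomial.X)).natDegree ≤ k - l := by
        refine le_trans (Polynomial.natDegree_prod_le _ _) ?_
        refine le_trans (Finset.sum_le_sum fun t _ => deg_le_one _) ?_
        simp
      have d3 : (∏ t ∈ Finset.range (x - k - 1),
          (1 - Polynomial.C (q ^ ((n + 1 - x) + 1 + t)) * Polynomial.X)).natDegree
            ≤ x - k - 1 := by
        refine le_trans (Polynomial.natDegree_prod_le _ _) ?_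
        refine le_trans (Finset.sum_le_sum fun t _ => deg_le_one _) ?_
        simp
      have := le_trans (Polynomial.natDegree_mul_le (p := _) (q := _))
        (add_le_add d1 (le_trans Polynomial.natDegree_mul_le (add_le_add d2 d3)))
      rw [← hp] at this
      omega
    have heval : ∀ r : ℕ, Polynomial.eval ((q⁻¹) ^ r) p
        = (∏ t ∈ Finset.range l, (1 - q ^ (M + 1 + t) * (q⁻¹) ^ r)) *
          ((∏ t ∈ Finset.range (k - l), (1 - q ^ (N + 1 + t) * (q⁻¹) ^ r)) *
           (∏ t ∈ Finset.range (x - k - 1), (1 - q ^ ((n + 1 - x) + 1 + t) * (q⁻¹) ^ r))) := by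
      intro r
      simp [hp, Polynomial.eval_prod]
    calc ∑ r ∈ Finset.range (min x (min M N) + 1),
        hypTerm q n m M N (-(x : ℤ)) ((x : ℤ) - n - 1) r
        = ∑ r ∈ Finset.range (min x (min M N) + 1),
            (P q (n + 1 - x) * P q M * P q N / (P q m * P q (n - m) * P q (M + N)))
              * (e q r * B q x r * Polynomial.eval ((q⁻¹) ^ r) p) := by
          refine Finset.sum_congr rfl fun r hr => ?_
          have hr' : r ≤ min x (min M N) := Nat.lt_succ_iff.mp (Finset.mem_range.mp hr)
          have hr1 : r ≤ x := le_trans hr' (min_le_left _ _)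
          have hr2 : r ≤ M := le_trans hr' (le_trans (min_le_right _ _) (min_le_left _ _))
          have hr3 : r ≤ N := le_trans hr' (le_trans (min_le_right _ _) (min_le_right _ _))
          rw [heval r]
          exact glue hq hq1 n m k l x r h2m hx hxk hlk hlm hl hr1 hr2 hr3
      _ = (P q (n + 1 - x) * P q M * P q N / (P q m * P q (n - m) * P q (M + N)))
            * ∑ r ∈ Finset.range (min x (min M N) + 1),
                e q r * B q x r * Polynomial.eval ((q⁻¹) ^ r) p := by
          rw [Finset.mul_sum]
      _ = (P q (n + 1 - x) * P q M * P q N / (P q m * P q (n - m) * P q (M + N)))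
            * ∑ r ∈ Finset.range (x + 1),
                e q r * B q x r * Polynomial.eval ((q⁻¹) ^ r) p := by
          congr 1
          refine Finset.sum_subset
            (Finset.range_subset_range.mpr (Nat.succ_le_succ (min_le_left _ _))) ?_
          intro r hr1 hr2
          have hrx : r ≤ x := Nat.lt_succ_iff.mp (Finset.mem_range.mp hr1)
          have hrmin : min x (min M N) < r := by
            by_contra hcon
            exact hr2 (Finset.mem_range.mpr (by omega))
          have hMN : M < r ∨ N < r := by
            by_contra hcon
            push_neg at hcon
            exact absurd (le_min hrx (le_min hcon.1 hcon.2)) (not_le.mpr hrmin)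
          have hz : Polynomial.eval ((q⁻¹) ^ r) p = 0 := by
            rw [heval r]
            rcases hMN with h | h
            · have hA : (∏ t ∈ Finset.range l, (1 - q ^ (M + 1 + t) * (q⁻¹) ^ r)) = 0 :=
                Finset.prod_eq_zero (i := r - M - 1) (Finset.mem_range.mpr (by omega))
                  (by rw [show M + 1 + (r - M - 1) = r by omega,
                      show q ^ r * (q⁻¹) ^ r = 1 by
                        rw [← mul_pow, mul_inv_cancel₀ (ne_of_gt hq), one_pow], sub_self])
              rw [hA, zero_mul]
            · have hB : (∏ t ∈ Finset.range (k - l), (1 - q ^ (N + 1 + t) * (q⁻¹) ^ r)) = 0 :=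
                Finset.prod_eq_zero (i := r - N - 1) (Finset.mem_range.mpr (by omega))
                  (by rw [show N + 1 + (r - N - 1) = r by omega,
                      show q ^ r * (q⁻¹) ^ r = 1 by
                        rw [← mul_pow, mul_inv_cancel₀ (ne_of_gt hq), one_pow], sub_self])
              rw [hB, zero_mul, mul_zero]
          rw [hz, mul_zero]
      _ = 0 := by rw [poly_vanish hq hq1 x p hdeg, mul_zero]
  rw [pq, hsum, mul_zero]
end
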